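/- arXiv:1403.6817 — 5 statements merged into one kernel-verified Lean document; each statement's English description precedes it below -/
import Mathlib

section
/- The algebra homomorphism Θ : H → ℂ[y₁^±,…,y_n^±]#_αG determined by Θ(x_i) = y_i − (ζt_i/(ζ−1)) y_{i+1}⁻¹ g_i and Θ(g_i) = g_i for all i ∈ {1,…,n} is injective. -/
/-!
Common setup for the twisted graded Hecke algebra associated to the homocyclic
group `G ≅ (ℤ/ℓℤ)^{n-1}` (Gan–Highfield, "Center of twisted graded Hecke
algebras for homocyclic groups").

All indices are 0-based: the paper's `x_i, g_i, t_i, τ_i` (for `i = 1, …, n`)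
correspond to index `i - 1 : Fin n` here; subscripts are taken mod `n` via the
(wrap-around) addition of `Fin n`.
-/

noncomputable section

namespace TGHA

/-- `ζ` raised to an exponent in `ZMod ℓ` (representative taken in `{0, …, ℓ-1}`). -/
def zp (ℓ : ℕ) (ζ : ℂ) (z : ZMod ℓ) : ℂ := ζ ^ z.val

/-- Given the vector `a` of diagonal exponents of a group element
`g = diag(ζ^{a 0}, …, ζ^{a (n-1)})`, `pS n ℓ a k` is the exponent `i_k` of `g_k` when
`g` is written as `g₁^{i₁} ⋯ g_{n-1}^{i_{n-1}}`, namely the partial sum `a 0 + ⋯ + a (k-1)`. -/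
def pS (n ℓ : ℕ) [NeZero n] (a : Fin n → ZMod ℓ) (k : ℕ) : ZMod ℓ :=
  ∑ m ∈ Finset.range k, a (Fin.ofNat n m)

/-- The 2-cocycle `α : G × G → ℂˣ`,
`α(g₁^{i₁}⋯g_{n-1}^{i_{n-1}}, g₁^{j₁}⋯g_{n-1}^{j_{n-1}}) = ζ^{-i₁j₂ - i₂j₃ - ⋯ - i_{n-2}j_{n-1}}`,
expressed in terms of the vectors of diagonal exponents of the two group elements. -/
def coc (n ℓ : ℕ) [NeZero n] (ζ : ℂ) (a b : Fin n → ZMod ℓ) : ℂ :=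
  zp ℓ ζ (-∑ k ∈ Finset.Icc 1 (n - 2), pS n ℓ a k * pS n ℓ b (k + 1))

/-- The homocyclic group `G`: diagonal matrices `g = diag(ζ^{a 0}, …, ζ^{a (n-1)})` in
`SL_n(ℂ)` with `g^ℓ = 1`, identified with their vectors `a` of exponents; the condition
`det g = 1` is `∑ i, a i = 0`. Written additively. -/
def Gsub (n ℓ : ℕ) : AddSubgroup (Fin n → ZMod ℓ) where
  carrier := {a | ∑ i, a i = 0}
  zero_mem' := by simp
  add_mem' := by
    intro a b ha hb
    simp only [Set.mem_setOf_eq] at *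
    simp [Finset.sum_add_distrib, ha, hb]
  neg_mem' := by
    intro a ha
    simp only [Set.mem_setOf_eq] at *
    simp [ha]

abbrev G (n ℓ : ℕ) := ↥(Gsub n ℓ)

/-- The vector of diagonal exponents of the generator `g_i`
(`g_i x_i = ζ x_i`, `g_i x_{i+1} = ζ⁻¹ x_{i+1}`, `g_i x_j = x_j` otherwise). -/
def gvec (n ℓ : ℕ) [NeZero n] (i : Fin n) : Fin n → ZMod ℓ :=
  Pi.single i 1 - Pi.single (i + 1) 1

lemma gvec_mem (n ℓ : ℕ) [NeZero n] (i : Fin n) : gvec n ℓ i ∈ Gsub n ℓ := by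
  show ∑ j, gvec n ℓ i j = 0
  simp [gvec, Finset.sum_sub_distrib]

/-- The generator `g_i` as an element of `G`. -/
def gelt (n ℓ : ℕ) [NeZero n] (i : Fin n) : G n ℓ := ⟨gvec n ℓ i, gvec_mem n ℓ i⟩

/-- The defining relations of the twisted graded Hecke algebra `H`, as a quotient of the
free algebra on generators `x_i` (`Sum.inl i`) and `u_g`, `g ∈ G` (`Sum.inr g`): the
relations `u_g u_h = α(g,h) u_{gh}`, `u_1 = 1`, `u_g x_i = ζ^{a_i} x_i u_g` present the
crossed product `TV #_α G`, and the last two relations are the Hecke relations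
`x_i x_{i+1} - x_{i+1} x_i = t_i g_i` and `x_i x_j = x_j x_i` for `|i - j| ∉ {1, n-1}`. -/
inductive Rel (n ℓ : ℕ) [NeZero n] (ζ : ℂ) (t : Fin n → ℂ) :
    FreeAlgebra ℂ (Fin n ⊕ G n ℓ) → FreeAlgebra ℂ (Fin n ⊕ G n ℓ) → Prop
  | grp (g h : G n ℓ) :
      Rel n ℓ ζ t (FreeAlgebra.ι ℂ (Sum.inr g) * FreeAlgebra.ι ℂ (Sum.inr h))
        (coc n ℓ ζ g.1 h.1 • FreeAlgebra.ι ℂ (Sum.inr (g + h)))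
  | one : Rel n ℓ ζ t (FreeAlgebra.ι ℂ (Sum.inr (0 : G n ℓ))) 1
  | gx (g : G n ℓ) (i : Fin n) :
      Rel n ℓ ζ t (FreeAlgebra.ι ℂ (Sum.inr g) * FreeAlgebra.ι ℂ (Sum.inl i))
        (zp ℓ ζ (g.1 i) • (FreeAlgebra.ι ℂ (Sum.inl i) * FreeAlgebra.ι ℂ (Sum.inr g)))
  | hecke (i : Fin n) :
      Rel n ℓ ζ t
        (FreeAlgebra.ι ℂ (Sum.inl i) * FreeAlgebra.ι ℂ (Sum.inl (i + 1)) -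
          FreeAlgebra.ι ℂ (Sum.inl (i + 1)) * FreeAlgebra.ι ℂ (Sum.inl i))
        (t i • FreeAlgebra.ι ℂ (Sum.inr (gelt n ℓ i)))
  | commx (i j : Fin n) (h₁ : j ≠ i + 1) (h₂ : i ≠ j + 1) :
      Rel n ℓ ζ t (FreeAlgebra.ι ℂ (Sum.inl i) * FreeAlgebra.ι ℂ (Sum.inl j))
        (FreeAlgebra.ι ℂ (Sum.inl j) * FreeAlgebra.ι ℂ (Sum.inl i))

/-- The twisted graded Hecke algebra `H`. -/
abbrev H (n ℓ : ℕ) [NeZero n] (ζ : ℂ) (t : Fin n → ℂ) := RingQuot (Rel n ℓ ζ t)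

/-- The image of `x_i` in `H`. -/
def xx (n ℓ : ℕ) [NeZero n] (ζ : ℂ) (t : Fin n → ℂ) (i : Fin n) : H n ℓ ζ t :=
  RingQuot.mkAlgHom ℂ (Rel n ℓ ζ t) (FreeAlgebra.ι ℂ (Sum.inl i))

/-- The image of `g ∈ G` in `H`. -/
def ug (n ℓ : ℕ) [NeZero n] (ζ : ℂ) (t : Fin n → ℂ) (g : G n ℓ) : H n ℓ ζ t :=
  RingQuot.mkAlgHom ℂ (Rel n ℓ ζ t) (FreeAlgebra.ι ℂ (Sum.inr g))

/-- Index set for the basis `y^p u_g` of the crossed product `ℂ[y₁^±,…,y_n^±] #_α G`. -/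
abbrev M (n ℓ : ℕ) := (Fin n → ℤ) × G n ℓ

/-- `χ(g, p)`: the scalar by which `g = diag(ζ^{a 0}, …)` acts on the Laurent monomial `y^p`;
for `g = g_i` it is `ζ^{p_i - p_{i+1}}`. -/
def chi (n ℓ : ℕ) [NeZero n] (ζ : ℂ) (a : Fin n → ZMod ℓ) (p : Fin n → ℤ) : ℂ :=
  zp ℓ ζ (∑ j, a j * (p j : ZMod ℓ))

/-- Structure constants of the crossed product `ℂ[y₁^±,…,y_n^±] #_α G` with respect to its
basis: `(y^p u_g) (y^q u_h) = α(g,h) χ(g,q) y^{p+q} u_{gh}`. -/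
def sigma (n ℓ : ℕ) [NeZero n] (ζ : ℂ) (a b : M n ℓ) : ℂ :=
  coc n ℓ ζ a.2.1 b.2.1 * chi n ℓ ζ a.2.1 b.1

/-- The basis element `y^p u_g` (`a = (p, g)`) of the crossed product
`ℂ[y₁^±,…,y_n^±] #_α G`, realized faithfully as the operator of left multiplication by it
on the underlying vector space of the crossed product. -/
def Top (n ℓ : ℕ) [NeZero n] (ζ : ℂ) (a : M n ℓ) : Module.End ℂ (M n ℓ →₀ ℂ) :=
  Finsupp.lsum ℂ fun b => sigma n ℓ ζ a b • Finsupp.lsingle (a + b)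

/-- The algebra containing (the left regular realization of) the crossed product
`ℂ[y₁^±,…,y_n^±] #_α G`. -/
abbrev A (n ℓ : ℕ) := Module.End ℂ (M n ℓ →₀ ℂ)

/-- The element `u_g`, `g ∈ G`, of the crossed product. -/
def Uy (n ℓ : ℕ) [NeZero n] (ζ : ℂ) (g : G n ℓ) : A n ℓ := Top n ℓ ζ (0, g)

/-- The element `y_i` of the crossed product. -/
def Ygen (n ℓ : ℕ) [NeZero n] (ζ : ℂ) (i : Fin n) : A n ℓ := Top n ℓ ζ (Pi.single i 1, 0)

/-- The element `y_i⁻¹` of the crossed product. -/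
def Yinv (n ℓ : ℕ) [NeZero n] (ζ : ℂ) (i : Fin n) : A n ℓ := Top n ℓ ζ (-Pi.single i 1, 0)

/-- `τ_i = t_i/(ζ-1)` for `i = 1, …, n-1` and `τ_n = ζ t_n/(ζ - 1)`. -/
def tau (n : ℕ) (ζ : ℂ) (t : Fin n → ℂ) (i : Fin n) : ℂ :=
  if (i : ℕ) = n - 1 then ζ * t i / (ζ - 1) else t i / (ζ - 1)

/-- `τ̃_i = τ_i^ℓ` for `i = 1, …, n-1` and `τ̃_n = (-1)^{n(ℓ-1)} τ_n^ℓ`. -/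
def taut (n ℓ : ℕ) (ζ : ℂ) (t : Fin n → ℂ) (i : Fin n) : ℂ :=
  if (i : ℕ) = n - 1 then (-1) ^ (n * (ℓ - 1)) * tau n ζ t i ^ ℓ else tau n ζ t i ^ ℓ

/-- The index set `J`: subsets `{i₁ < ⋯ < i_k}` of `{1, …, n}` with
`|i_r - i_s| ∉ {1, n-1}`, i.e. containing no pair of (cyclically) adjacent indices. -/
def Jset (n : ℕ) [NeZero n] : Finset (Finset (Fin n)) :=
  Finset.univ.filter fun S => ∀ i ∈ S, ∀ j ∈ S, j ≠ i + 1

/-- The exponent vector `δ - ε_{i₁} - ⋯ - ε_{i_k}` for `S = {i₁, …, i_k} ∈ J`: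
the entry at `j` is `0` if some `ε_i`, `i ∈ S`, covers position `j` (i.e. `j ∈ S` or
`j - 1 ∈ S` cyclically) and `1` otherwise. -/
def expS (n : ℕ) [NeZero n] (S : Finset (Fin n)) (j : Fin n) : ℕ :=
  if j ∈ S ∨ j - 1 ∈ S then 0 else 1

/-- The ordered monomial `x₁^{p₁} ⋯ x_n^{p_n} ∈ H`. -/
def xpow (n ℓ : ℕ) [NeZero n] (ζ : ℂ) (t : Fin n → ℂ) (p : Fin n → ℕ) : H n ℓ ζ t :=
  ((List.finRange n).map fun j => xx n ℓ ζ t j ^ p j).prod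

/-- The product `g_{i₁} * ⋯ * g_{i_k} ∈ H` over `S = {i₁ < ⋯ < i_k}` (in increasing
order); since `u_g u_h = α(g,h) u_{gh}` holds in `H`, this is the `*`-product. -/
def gprodS (n ℓ : ℕ) [NeZero n] (ζ : ℂ) (t : Fin n → ℂ) (S : Finset (Fin n)) :
    H n ℓ ζ t :=
  ((S.sort (· ≤ ·)).map fun i => ug n ℓ ζ t (gelt n ℓ i)).prod

/-- The element `w = Σ_{{i₁<⋯<i_k} ∈ J} τ_{i₁} ⋯ τ_{i_k} x^{δ-ε_{i₁}-⋯-ε_{i_k}}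
g_{i₁} * ⋯ * g_{i_k}` of `H`. -/
def w (n ℓ : ℕ) [NeZero n] (ζ : ℂ) (t : Fin n → ℂ) : H n ℓ ζ t :=
  ∑ S ∈ Jset n, (∏ i ∈ S, tau n ζ t i) • (xpow n ℓ ζ t (expS n S) * gprodS n ℓ ζ t S)

/-- `ν_r = (-1)^r (ℓ/(ℓ-r)) C(ℓ-r, r)`. -/
def nu (ℓ r : ℕ) : ℂ := (-1) ^ r * ((ℓ : ℂ) / ((ℓ : ℂ) - (r : ℂ))) * (Nat.choose (ℓ - r) r : ℂ)

/-- The polynomial `F` in the variables `a_i = X (Sum.inl i)` and `b = X (Sum.inr ())`. -/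
def Fpoly (n ℓ : ℕ) [NeZero n] (ζ : ℂ) (t : Fin n → ℂ) : MvPolynomial (Fin n ⊕ Unit) ℂ :=
  (∑ S ∈ Jset n, (∏ i ∈ S, taut n ℓ ζ t i) •
      ∏ j : Fin n, MvPolynomial.X (Sum.inl j) ^ expS n S j) -
    ∑ r ∈ Finset.range (ℓ / 2 + 1),
      ((-1) ^ (n * r) * ζ ^ ((n - 2) * r) * nu ℓ r * (∏ i : Fin n, tau n ζ t i) ^ r) •
        MvPolynomial.X (Sum.inr ()) ^ (ℓ - 2 * r)

end TGHA

/-!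
The monomials `x^v u_g`, `v` a sorted word in the `x_i`, span `H`: the Hecke relations sort a
word at the cost of terms of smaller length. Applied to the unit vector `y^0 u_0`, each `Θ(x_i)`
acts as `y_i` up to terms of lower total `y`-degree, and `Θ(u_g)` is a nonzero multiple of `u_g`
because the `g_i` generate `G`. So `Θ(x^v u_g)` sends `y^0 u_0` to a nonzero multiple of
`y^v u_g` plus lower terms; these leading monomials are pairwise distinct, so the images of the
spanning monomials are linearly independent, and `Θ` is injective.
-/

theorem RingQuot.span_eq_top_of_ι_mul_mem {R X ι : Type*} [CommSemiring R]
    {r : FreeAlgebra R X → FreeAlgebra R X → Prop} {b : ι → RingQuot r}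
    (h1 : (1 : RingQuot r) ∈ Submodule.span R (Set.range b))
    (hmul : ∀ x i, RingQuot.mkAlgHom R r (FreeAlgebra.ι R x) * b i ∈
      Submodule.span R (Set.range b)) :
    Submodule.span R (Set.range b) = ⊤ := by
  set B := Submodule.span R (Set.range b)
  have left_closed : ∀ a : RingQuot r, (∀ i, a * b i ∈ B) → ∀ z ∈ B, a * z ∈ B :=
    fun a ha z hz =>
      (Submodule.span_le (p := B.comap (LinearMap.mulLeft R a)) |>.mpr
        (Set.range_subset_iff.mpr ha)) hz
  have hB : ∀ a : RingQuot r, ∀ z ∈ B, a * z ∈ B := by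
    intro a
    obtain ⟨a, rfl⟩ := RingQuot.mkAlgHom_surjective R r a
    induction a using FreeAlgebra.induction with
    | grade0 c =>
      intro z hz
      rw [AlgHom.commutes, Algebra.algebraMap_eq_smul_one, smul_mul_assoc, one_mul]
      exact B.smul_mem c hz
    | grade1 x => exact left_closed _ (hmul x)
    | mul a a' ha ha' => intro z hz; rw [map_mul, mul_assoc]; exact ha _ (ha' z hz)
    | add a a' ha ha' => intro z hz; rw [map_add, add_mul]; exact B.add_mem (ha z hz) (ha' z hz)
  exact Submodule.eq_top_iff'.mpr fun a => mul_one a ▸ hB a 1 h1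

theorem Finsupp.linearIndependent_of_leading {ι M K β : Type*} [Ring K] [NoZeroDivisors K]
    [LinearOrder β] (deg : M → β) (u : ι → M →₀ K) (lead : ι → M)
    (hlead : Function.Injective lead) (hne : ∀ i, u i (lead i) ≠ 0)
    (hlt : ∀ i m, u i m ≠ 0 → m ≠ lead i → deg m < deg (lead i)) :
    LinearIndependent K u := by
  classical
  rw [linearIndependent_iff']
  intro s
  induction s using Finset.induction_on_max_value (deg ∘ lead) with
  | empty => simp
  | insert a s has hmax ih =>
    intro c hc
    have hvanish : ∀ x ∈ s, u x (lead a) = 0 := fun x hx => by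
      by_contra h
      exact (hmax x hx).not_gt (hlt x _ h (hlead.ne (ne_of_mem_of_not_mem hx has)).symm)
    have hca : c a = 0 := by
      have h := DFunLike.congr_fun hc (lead a)
      rw [Finset.sum_insert has, Finsupp.add_apply, Finsupp.finsetSum_apply,
        Finset.sum_eq_zero fun x hx => by rw [Finsupp.smul_apply, hvanish x hx, smul_zero],
        add_zero, Finsupp.smul_apply, smul_eq_mul, Finsupp.coe_zero, Pi.zero_apply] at h
      exact (mul_eq_zero.mp h).resolve_right (hne a)
    rw [Finset.sum_insert has, hca, zero_smul, zero_add] at hc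
    intro i hi
    rcases Finset.mem_insert.mp hi with rfl | hi
    · exact hca
    · exact ih c hc i hi

namespace TGHA

section Relations

variable {n ℓ : ℕ} [NeZero n] {ζ : ℂ} {t : Fin n → ℂ}

lemma ug_mul_ug (g h : G n ℓ) :
    ug n ℓ ζ t g * ug n ℓ ζ t h = coc n ℓ ζ g.1 h.1 • ug n ℓ ζ t (g + h) := by
  simpa [ug] using RingQuot.mkAlgHom_rel ℂ (Rel.grp (ζ := ζ) (t := t) g h)

lemma ug_zero : ug n ℓ ζ t 0 = 1 := by
  simpa [ug] using RingQuot.mkAlgHom_rel ℂ (Rel.one (n := n) (ℓ := ℓ) (ζ := ζ) (t := t))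

lemma ug_mul_xx (g : G n ℓ) (i : Fin n) :
    ug n ℓ ζ t g * xx n ℓ ζ t i = zp ℓ ζ (g.1 i) • (xx n ℓ ζ t i * ug n ℓ ζ t g) := by
  simpa [ug, xx] using RingQuot.mkAlgHom_rel ℂ (Rel.gx (ζ := ζ) (t := t) g i)

lemma xx_mul_xx_succ (i : Fin n) :
    xx n ℓ ζ t i * xx n ℓ ζ t (i + 1) =
      xx n ℓ ζ t (i + 1) * xx n ℓ ζ t i + t i • ug n ℓ ζ t (gelt n ℓ i) := by
  have h := RingQuot.mkAlgHom_rel ℂ (Rel.hecke (n := n) (ℓ := ℓ) (ζ := ζ) (t := t) i)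
  simp only [map_sub, map_mul, map_smul] at h
  change xx n ℓ ζ t i * xx n ℓ ζ t (i + 1) - xx n ℓ ζ t (i + 1) * xx n ℓ ζ t i =
    t i • ug n ℓ ζ t (gelt n ℓ i) at h
  rw [← h, add_sub_cancel]

lemma xx_mul_xx_comm (i j : Fin n) (h₁ : j ≠ i + 1) (h₂ : i ≠ j + 1) :
    xx n ℓ ζ t i * xx n ℓ ζ t j = xx n ℓ ζ t j * xx n ℓ ζ t i := by
  simpa [xx] using RingQuot.mkAlgHom_rel ℂ (Rel.commx (ζ := ζ) (t := t) i j h₁ h₂)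

lemma exists_xx_mul_xx_eq (i j : Fin n) :
    ∃ (s : ℂ) (g : G n ℓ),
      xx n ℓ ζ t i * xx n ℓ ζ t j = xx n ℓ ζ t j * xx n ℓ ζ t i + s • ug n ℓ ζ t g := by
  by_cases h₁ : j = i + 1
  · exact ⟨t i, gelt n ℓ i, h₁ ▸ xx_mul_xx_succ i⟩
  by_cases h₂ : i = j + 1
  · refine ⟨-t j, gelt n ℓ j, ?_⟩
    rw [h₂, xx_mul_xx_succ j]
    module
  · exact ⟨0, 0, by rw [xx_mul_xx_comm i j h₁ h₂, zero_smul, add_zero]⟩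

end Relations

def xword (n ℓ : ℕ) [NeZero n] (ζ : ℂ) (t : Fin n → ℂ) (l : List (Fin n)) : H n ℓ ζ t :=
  (l.map (xx n ℓ ζ t)).prod

abbrev SortedWord (n : ℕ) := {v : List (Fin n) // v.Pairwise (· ≤ ·)}

def orderedMonomial (n ℓ : ℕ) [NeZero n] (ζ : ℂ) (t : Fin n → ℂ) (p : SortedWord n × G n ℓ) :
    H n ℓ ζ t :=
  xword n ℓ ζ t p.1.1 * ug n ℓ ζ t p.2

def orderedSpan (n ℓ : ℕ) [NeZero n] (ζ : ℂ) (t : Fin n → ℂ) (k : ℕ) :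
    Submodule ℂ (H n ℓ ζ t) :=
  Submodule.span ℂ (orderedMonomial n ℓ ζ t '' {p | p.1.1.length ≤ k})

section Spanning

variable {n ℓ : ℕ} [NeZero n] {ζ : ℂ} {t : Fin n → ℂ}

@[simp] lemma xword_nil : xword n ℓ ζ t [] = 1 := rfl

@[simp] lemma xword_cons (i : Fin n) (l : List (Fin n)) :
    xword n ℓ ζ t (i :: l) = xx n ℓ ζ t i * xword n ℓ ζ t l := by
  simp [xword]

lemma ug_mul_xword (g : G n ℓ) (l : List (Fin n)) :
    ∃ c : ℂ, ug n ℓ ζ t g * xword n ℓ ζ t l = c • (xword n ℓ ζ t l * ug n ℓ ζ t g) := by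
  induction l with
  | nil => exact ⟨1, by simp⟩
  | cons i l ih =>
    obtain ⟨c, hc⟩ := ih
    refine ⟨zp ℓ ζ (g.1 i) * c, ?_⟩
    rw [xword_cons, ← mul_assoc, ug_mul_xx, smul_mul_assoc, mul_assoc, hc, mul_smul_comm,
      smul_smul, ← mul_assoc]

lemma orderedMonomial_mem_orderedSpan {k : ℕ} {p : SortedWord n × G n ℓ}
    (hp : p.1.1.length ≤ k) : orderedMonomial n ℓ ζ t p ∈ orderedSpan n ℓ ζ t k :=
  Submodule.subset_span ⟨p, hp, rfl⟩

lemma orderedSpan_mono {k m : ℕ} (h : k ≤ m) : orderedSpan n ℓ ζ t k ≤ orderedSpan n ℓ ζ t m :=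
  Submodule.span_mono (Set.image_mono fun _ hp => le_trans hp h)

lemma orderedSpan_le_span (k : ℕ) :
    orderedSpan n ℓ ζ t k ≤ Submodule.span ℂ (Set.range (orderedMonomial n ℓ ζ t)) :=
  Submodule.span_mono (Set.image_subset_range _ _)

lemma mul_ug_mem_orderedSpan {k : ℕ} {z : H n ℓ ζ t} (hz : z ∈ orderedSpan n ℓ ζ t k)
    (g : G n ℓ) : z * ug n ℓ ζ t g ∈ orderedSpan n ℓ ζ t k := by
  refine (Submodule.span_le (p := (orderedSpan n ℓ ζ t k).comap
    (LinearMap.mulRight ℂ (ug n ℓ ζ t g))) |>.mpr ?_) hz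
  rintro _ ⟨⟨v, h⟩, hv, rfl⟩
  rw [SetLike.mem_coe, Submodule.mem_comap, LinearMap.mulRight_apply, orderedMonomial,
    mul_assoc, ug_mul_ug, mul_smul_comm]
  exact Submodule.smul_mem _ _ (orderedMonomial_mem_orderedSpan (p := (v, h + g)) hv)

lemma xx_mul_mem_orderedSpan_of_insert {m : ℕ}
    (hins : ∀ l : List (Fin n), l.Pairwise (· ≤ ·) → l.length ≤ m → ∀ i,
      xx n ℓ ζ t i * xword n ℓ ζ t l - xword n ℓ ζ t (l.orderedInsert (· ≤ ·) i) ∈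
        orderedSpan n ℓ ζ t l.length)
    {z : H n ℓ ζ t} (hz : z ∈ orderedSpan n ℓ ζ t m) (i : Fin n) :
    xx n ℓ ζ t i * z ∈ orderedSpan n ℓ ζ t (m + 1) := by
  refine (Submodule.span_le (p := (orderedSpan n ℓ ζ t (m + 1)).comap
    (LinearMap.mulLeft ℂ (xx n ℓ ζ t i))) |>.mpr ?_) hz
  rintro _ ⟨⟨⟨v, hv⟩, g⟩, hlen : v.length ≤ m, rfl⟩
  rw [SetLike.mem_coe, Submodule.mem_comap, LinearMap.mulLeft_apply, orderedMonomial]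
  have hsorted : (v.orderedInsert (· ≤ ·) i).Pairwise (· ≤ ·) := hv.orderedInsert i v
  rw [← mul_assoc, ← sub_add_cancel (xx n ℓ ζ t i * xword n ℓ ζ t v)
    (xword n ℓ ζ t (v.orderedInsert (· ≤ ·) i)), add_mul]
  refine add_mem (mul_ug_mem_orderedSpan (orderedSpan_mono (by omega) (hins v hv hlen i)) g)
    (orderedMonomial_mem_orderedSpan (p := (⟨_, hsorted⟩, g)) ?_)
  rw [List.orderedInsert_length]
  omega

lemma xx_mul_xword_sub_mem_orderedSpan (l : List (Fin n)) (hl : l.Pairwise (· ≤ ·))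
    (i : Fin n) :
    xx n ℓ ζ t i * xword n ℓ ζ t l - xword n ℓ ζ t (l.orderedInsert (· ≤ ·) i) ∈
      orderedSpan n ℓ ζ t l.length := by
  induction hk : l.length using Nat.strong_induction_on generalizing l i with
  | _ k ih =>
  match l, hl with
  | [], _ => simp
  | a :: rest, hl =>
    by_cases hia : i ≤ a
    · simp [List.orderedInsert, hia]
    obtain ⟨s, g, hswap⟩ := exists_xx_mul_xx_eq (ℓ := ℓ) (ζ := ζ) (t := t) i a
    obtain ⟨c, hc⟩ := ug_mul_xword (ζ := ζ) (t := t) g rest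
    have hrest : rest.length < k := by simp [← hk]
    have hins := ih rest.length hrest rest hl.of_cons i rfl
    have hxa := xx_mul_mem_orderedSpan_of_insert
      (fun l hl hle i => ih l.length (by omega) l hl i rfl) hins a
    have hkey : xx n ℓ ζ t i * xword n ℓ ζ t (a :: rest) -
        xword n ℓ ζ t ((a :: rest).orderedInsert (· ≤ ·) i) =
        xx n ℓ ζ t a * (xx n ℓ ζ t i * xword n ℓ ζ t rest -
          xword n ℓ ζ t (rest.orderedInsert (· ≤ ·) i)) +
        (s * c) • orderedMonomial n ℓ ζ t (⟨rest, hl.of_cons⟩, g) := by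
      rw [List.orderedInsert, if_neg hia, xword_cons, xword_cons, ← mul_assoc, hswap,
        orderedMonomial, add_mul, smul_mul_assoc, hc, mul_sub, ← mul_assoc]
      dsimp only
      module
    rw [hkey]
    exact add_mem (orderedSpan_mono (by simp [← hk]) hxa)
      (Submodule.smul_mem _ _ (orderedMonomial_mem_orderedSpan (by simp [← hk])))

lemma xx_mul_mem_orderedSpan {m : ℕ} {z : H n ℓ ζ t} (hz : z ∈ orderedSpan n ℓ ζ t m)
    (i : Fin n) : xx n ℓ ζ t i * z ∈ orderedSpan n ℓ ζ t (m + 1) :=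
  xx_mul_mem_orderedSpan_of_insert (fun l hl _ i => xx_mul_xword_sub_mem_orderedSpan l hl i) hz i

theorem span_orderedMonomial_eq_top :
    Submodule.span ℂ (Set.range (orderedMonomial n ℓ ζ t)) = ⊤ := by
  refine RingQuot.span_eq_top_of_ι_mul_mem ?_ ?_
  · refine Submodule.subset_span ⟨(⟨[], List.Pairwise.nil⟩, 0), ?_⟩
    simp [orderedMonomial, ug_zero]
  · rintro (i | g) ⟨v, h⟩
    · exact orderedSpan_le_span _ (xx_mul_mem_orderedSpan
        (orderedMonomial_mem_orderedSpan (p := (v, h)) le_rfl) i)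
    · obtain ⟨c, hc⟩ := ug_mul_xword (ζ := ζ) (t := t) g v.1
      have : ug n ℓ ζ t g * orderedMonomial n ℓ ζ t (v, h) =
          (c * coc n ℓ ζ g.1 h.1) • orderedMonomial n ℓ ζ t (v, g + h) := by
        rw [orderedMonomial, orderedMonomial, ← mul_assoc, hc, smul_mul_assoc, mul_assoc,
          ug_mul_ug, mul_smul_comm, smul_smul]
      exact this ▸ Submodule.smul_mem _ _ (Submodule.subset_span ⟨_, rfl⟩)

end Spanning

open Fin.NatCast in
lemma addSubgroup_closure_range_gelt_eq_top {n ℓ : ℕ} [NeZero n] [NeZero ℓ] :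
    AddSubgroup.closure (Set.range (gelt n ℓ)) = ⊤ := by
  set K := AddSubgroup.closure (Set.range (gelt n ℓ))
  -- `d j = ε_j - ε_0 = -(g_0 + ⋯ + g_{j-1})`, and `g = ∑ g_j d_j` because `∑ g_j = 0`.
  let d : Fin n → G n ℓ := fun j =>
    ⟨Pi.single j 1 - Pi.single 0 1, by simp [Gsub, Finset.sum_sub_distrib]⟩
  have hd : ∀ k : ℕ, d k ∈ K := by
    intro k
    induction k with
    | zero => exact (show d ((0 : ℕ) : Fin n) = 0 from Subtype.ext (by simp [d])) ▸ K.zero_mem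
    | succ k ih =>
      have : d ((k + 1 : ℕ) : Fin n) = d k - gelt n ℓ k :=
        Subtype.ext (by simp [d, gelt, gvec])
      rw [this]
      exact sub_mem ih (AddSubgroup.subset_closure ⟨k, rfl⟩)
  refine AddSubgroup.eq_top_iff' _ |>.mpr fun g => ?_
  have hg : g = ∑ j, (g.1 j).val • d j := by
    apply Subtype.ext
    have h0 : ∑ j, g.1 j = 0 := g.2
    rw [AddSubmonoidClass.coe_finsetSum]
    funext x
    simp only [Finset.sum_apply, AddSubmonoidClass.coe_nsmul, d, Pi.sub_apply,
      smul_sub, Finset.sum_sub_distrib, nsmul_eq_mul, Pi.mul_apply, Pi.natCast_apply,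
      ZMod.natCast_zmod_val, Pi.single_apply, mul_ite, mul_one, mul_zero, Finset.sum_ite_eq,
      Finset.mem_univ, if_true]
    split_ifs <;> simp [h0]
  rw [hg]
  exact sum_mem fun j _ => AddSubgroup.nsmul_mem _ (Fin.cast_val_eq_self j ▸ hd j) _

lemma addSubmonoid_closure_range_gelt_eq_top {n ℓ : ℕ} [NeZero n] [NeZero ℓ] :
    AddSubmonoid.closure (Set.range (gelt n ℓ)) = ⊤ := by
  rw [← AddSubgroup.closure_toAddSubmonoid_of_finite, addSubgroup_closure_range_gelt_eq_top]
  rfl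

section Degree

variable {n ℓ : ℕ}

def totalDeg (m : M n ℓ) : ℤ := ∑ j, m.1 j

lemma totalDeg_add (a b : M n ℓ) : totalDeg (a + b) = totalDeg a + totalDeg b := by
  simp [totalDeg, Finset.sum_add_distrib]

def degLT (n ℓ : ℕ) (d : ℤ) : Submodule ℂ (M n ℓ →₀ ℂ) :=
  Finsupp.supported ℂ ℂ {m | totalDeg m < d}

lemma degLT_mono {d d' : ℤ} (h : d ≤ d') : degLT n ℓ d ≤ degLT n ℓ d' :=
  Finsupp.supported_mono fun _ hm => lt_of_lt_of_le hm h

lemma single_mem_degLT {m : M n ℓ} {d : ℤ} (h : totalDeg m < d) (c : ℂ) :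
    Finsupp.single m c ∈ degLT n ℓ d :=
  Finsupp.single_mem_supported ℂ c h

lemma apply_eq_of_sub_mem_degLT {w w' : M n ℓ →₀ ℂ} {d : ℤ} (h : w - w' ∈ degLT n ℓ d)
    {m : M n ℓ} (hm : d ≤ totalDeg m) : w m = w' m := by
  have := (Finsupp.mem_supported' ℂ _).mp h m (by simp only [Set.mem_ofPred_eq]; omega)
  rwa [Finsupp.sub_apply, sub_eq_zero] at this

def countVec (l : List (Fin n)) : Fin n → ℤ := fun j => (l.count j : ℤ)

lemma countVec_nil : countVec ([] : List (Fin n)) = 0 := by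
  funext j
  simp [countVec]

lemma countVec_cons (i : Fin n) (l : List (Fin n)) :
    countVec (i :: l) = Pi.single i 1 + countVec l := by
  funext j
  by_cases h : j = i
  · subst h
    simp [countVec, add_comm]
  · simp [countVec, h, Ne.symm h]

lemma totalDeg_countVec (l : List (Fin n)) (g : G n ℓ) :
    totalDeg ((countVec l, g) : M n ℓ) = l.length := by
  have := Multiset.sum_count_eq_card (s := Finset.univ) (m := (l : Multiset (Fin n)))
    (fun a _ => Finset.mem_univ a)
  simp only [Multiset.coe_count, Multiset.coe_card] at this
  simp only [totalDeg, countVec]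
  exact_mod_cast this

lemma eq_of_countVec_eq {v v' : List (Fin n)} (hv : v.Pairwise (· ≤ ·))
    (hv' : v'.Pairwise (· ≤ ·)) (h : countVec v = countVec v') : v = v' :=
  List.Perm.eq_of_pairwise' hv hv' (List.perm_iff_count.mpr fun a => by
    simpa [countVec] using congrFun h a)

end Degree

section CrossedProduct

variable {n ℓ : ℕ} [NeZero n] {ζ : ℂ}

lemma coc_ne_zero (hζ : ζ ≠ 0) (a b : Fin n → ZMod ℓ) : coc n ℓ ζ a b ≠ 0 := pow_ne_zero _ hζ

lemma chi_ne_zero (hζ : ζ ≠ 0) (a : Fin n → ZMod ℓ) (p : Fin n → ℤ) : chi n ℓ ζ a p ≠ 0 :=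
  pow_ne_zero _ hζ

lemma Top_single (a b : M n ℓ) (c : ℂ) :
    Top n ℓ ζ a (Finsupp.single b c) = Finsupp.single (a + b) (sigma n ℓ ζ a b * c) := by
  simp [Top, Finsupp.smul_single]

lemma Uy_single (g : G n ℓ) (q : Fin n → ℤ) (h : G n ℓ) :
    Uy n ℓ ζ g (Finsupp.single (q, h) 1) =
      (coc n ℓ ζ g.1 h.1 * chi n ℓ ζ g.1 q) • Finsupp.single (q, g + h) 1 := by
  simp [Uy, Top_single, sigma, Finsupp.smul_single]

lemma Ygen_single (i : Fin n) (m : M n ℓ) :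
    Ygen n ℓ ζ i (Finsupp.single m 1) = Finsupp.single ((Pi.single i 1, 0) + m) 1 := by
  simp [Ygen, Top_single, sigma, coc, chi, pS, zp]

lemma Top_mem_degLT (a : M n ℓ) {d : ℤ} {v : M n ℓ →₀ ℂ} (hv : v ∈ degLT n ℓ d) :
    Top n ℓ ζ a v ∈ degLT n ℓ (totalDeg a + d) := by
  rw [degLT, Finsupp.supported_eq_span_single] at hv
  refine (Submodule.span_le (p := (degLT n ℓ (totalDeg a + d)).comap (Top n ℓ ζ a)) |>.mpr ?_) hv
  rintro _ ⟨m, hm : totalDeg m < d, rfl⟩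
  rw [SetLike.mem_coe, Submodule.mem_comap, Top_single]
  exact single_mem_degLT (by rw [totalDeg_add]; omega) _

lemma Ygen_mem_degLT (i : Fin n) {d : ℤ} {v : M n ℓ →₀ ℂ} (hv : v ∈ degLT n ℓ d) :
    Ygen n ℓ ζ i v ∈ degLT n ℓ (d + 1) := by
  refine degLT_mono (le_of_eq ?_) (Top_mem_degLT (ζ := ζ) (Pi.single i 1, 0) hv)
  simp [totalDeg, Pi.single_apply, add_comm]

end CrossedProduct

def thetaX (n ℓ : ℕ) [NeZero n] (ζ : ℂ) (t : Fin n → ℂ) (i : Fin n) : A n ℓ :=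
  Ygen n ℓ ζ i - (ζ * t i / (ζ - 1)) • (Yinv n ℓ ζ (i + 1) * Uy n ℓ ζ (gelt n ℓ i))

section Theta

variable {n ℓ : ℕ} [NeZero n] {ζ : ℂ} {t : Fin n → ℂ} {Θ : H n ℓ ζ t →ₐ[ℂ] A n ℓ}

lemma thetaX_sub_Ygen_mem_degLT (i : Fin n) {d : ℤ} {v : M n ℓ →₀ ℂ}
    (hv : v ∈ degLT n ℓ (d + 1)) : thetaX n ℓ ζ t i v - Ygen n ℓ ζ i v ∈ degLT n ℓ d := by
  have hUy := Top_mem_degLT (ζ := ζ) (0, gelt n ℓ i) hv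
  have hYinv := Top_mem_degLT (ζ := ζ) (-Pi.single (i + 1) 1, 0) hUy
  rw [thetaX, LinearMap.sub_apply, sub_sub_cancel_left, LinearMap.smul_apply,
    Module.End.mul_apply]
  refine neg_mem (Submodule.smul_mem _ _ (degLT_mono (le_of_eq ?_) hYinv))
  simp [totalDeg, Pi.single_apply]

lemma theta_xword_single_sub_mem_degLT (hΘx : ∀ i, Θ (xx n ℓ ζ t i) = thetaX n ℓ ζ t i)
    (l : List (Fin n)) (g : G n ℓ) :
    Θ (xword n ℓ ζ t l) (Finsupp.single (0, g) 1) - Finsupp.single (countVec l, g) 1 ∈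
      degLT n ℓ l.length := by
  induction l with
  | nil => simp [countVec_nil]
  | cons i l ih =>
    rw [xword_cons, map_mul, Module.End.mul_apply, hΘx, List.length_cons, Nat.cast_succ]
    generalize Θ (xword n ℓ ζ t l) (Finsupp.single (0, g) 1) = E at ih
    have hS : Finsupp.single ((countVec l, g) : M n ℓ) (1 : ℂ) ∈ degLT n ℓ (l.length + 1) :=
      single_mem_degLT (by rw [totalDeg_countVec]; omega) 1
    have hE : E ∈ degLT n ℓ (l.length + 1) := by
      simpa using add_mem (degLT_mono (by omega) ih) hS
    have hsplit : thetaX n ℓ ζ t i E - Finsupp.single (countVec (i :: l), g) 1 =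
        (thetaX n ℓ ζ t i E - Ygen n ℓ ζ i E) +
          Ygen n ℓ ζ i (E - Finsupp.single (countVec l, g) 1) := by
      rw [map_sub, Ygen_single, countVec_cons, Prod.mk_add_mk, zero_add]
      abel
    rw [hsplit]
    exact add_mem (degLT_mono (by omega) (thetaX_sub_Ygen_mem_degLT i hE))
      (Ygen_mem_degLT i ih)

lemma exists_theta_ug_single [NeZero ℓ] (hζ : ζ ≠ 0)
    (hΘg : ∀ i, Θ (ug n ℓ ζ t (gelt n ℓ i)) = Uy n ℓ ζ (gelt n ℓ i)) (g : G n ℓ) :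
    ∀ (q : Fin n → ℤ) (h : G n ℓ), ∃ c : ℂ, c ≠ 0 ∧
      Θ (ug n ℓ ζ t g) (Finsupp.single (q, h) 1) = c • Finsupp.single (q, g + h) 1 := by
  have hg : g ∈ AddSubmonoid.closure (Set.range (gelt n ℓ)) := by
    rw [addSubmonoid_closure_range_gelt_eq_top]; trivial
  induction hg using AddSubmonoid.closure_induction with
  | mem x hx =>
    obtain ⟨i, rfl⟩ := hx
    intro q h
    exact ⟨_, mul_ne_zero (coc_ne_zero hζ _ _) (chi_ne_zero hζ _ _), by rw [hΘg, Uy_single]⟩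
  | zero => exact fun q h => ⟨1, one_ne_zero, by simp [ug_zero]⟩
  | add x y _ _ ihx ihy =>
    intro q h
    obtain ⟨c₂, hc₂, ey⟩ := ihy q h
    obtain ⟨c₁, hc₁, ex⟩ := ihx q (y + h)
    have hco := coc_ne_zero hζ x.1 y.1
    refine ⟨(coc n ℓ ζ x.1 y.1)⁻¹ * (c₁ * c₂),
      mul_ne_zero (inv_ne_zero hco) (mul_ne_zero hc₁ hc₂), ?_⟩
    have hxy : Θ (ug n ℓ ζ t (x + y)) = (coc n ℓ ζ x.1 y.1)⁻¹ •
        (Θ (ug n ℓ ζ t x) * Θ (ug n ℓ ζ t y)) := by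
      rw [← map_mul, ug_mul_ug, map_smul, inv_smul_smul₀ hco]
    rw [hxy, LinearMap.smul_apply, Module.End.mul_apply, ey, map_smul, ex, add_assoc, smul_smul,
      smul_smul, mul_assoc, mul_comm c₂]

lemma exists_theta_orderedMonomial_sub_mem_degLT [NeZero ℓ] (hζ : ζ ≠ 0)
    (hΘx : ∀ i, Θ (xx n ℓ ζ t i) = thetaX n ℓ ζ t i)
    (hΘg : ∀ i, Θ (ug n ℓ ζ t (gelt n ℓ i)) = Uy n ℓ ζ (gelt n ℓ i))
    (p : SortedWord n × G n ℓ) :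
    ∃ c : ℂ, c ≠ 0 ∧ Θ (orderedMonomial n ℓ ζ t p) (Finsupp.single 0 1) -
      c • Finsupp.single (countVec p.1.1, p.2) 1 ∈ degLT n ℓ p.1.1.length := by
  obtain ⟨c, hc, hug⟩ := exists_theta_ug_single hζ hΘg p.2 0 0
  refine ⟨c, hc, ?_⟩
  rw [orderedMonomial, map_mul, Module.End.mul_apply, ← Prod.mk_zero_zero, hug, add_zero,
    map_smul, ← smul_sub]
  exact Submodule.smul_mem _ c (theta_xword_single_sub_mem_degLT hΘx p.1.1 p.2)

theorem linearIndependent_theta_orderedMonomial [NeZero ℓ] (hζ : ζ ≠ 0)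
    (hΘx : ∀ i, Θ (xx n ℓ ζ t i) = thetaX n ℓ ζ t i)
    (hΘg : ∀ i, Θ (ug n ℓ ζ t (gelt n ℓ i)) = Uy n ℓ ζ (gelt n ℓ i)) :
    LinearIndependent ℂ fun p : SortedWord n × G n ℓ =>
      Θ (orderedMonomial n ℓ ζ t p) (Finsupp.single 0 1) := by
  choose c hc hmem using exists_theta_orderedMonomial_sub_mem_degLT hζ hΘx hΘg
  have hlead : ∀ p m, totalDeg ((countVec p.1.1, p.2) : M n ℓ) ≤ totalDeg m →
      Θ (orderedMonomial n ℓ ζ t p) (Finsupp.single 0 1) m =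
        c p * Finsupp.single (countVec p.1.1, p.2) 1 m := fun p m hm =>
    apply_eq_of_sub_mem_degLT (hmem p) (by rwa [totalDeg_countVec] at hm)
  refine Finsupp.linearIndependent_of_leading totalDeg _ (fun p => (countVec p.1.1, p.2))
    ?_ (fun p => ?_) (fun p m hm hne => ?_)
  · rintro ⟨⟨v, hv⟩, g⟩ ⟨⟨v', hv'⟩, g'⟩ h
    obtain ⟨hvv, rfl⟩ := Prod.mk.inj h
    obtain rfl := eq_of_countVec_eq hv hv' hvv
    rfl
  · simpa [hlead p _ le_rfl] using hc p
  · by_contra hle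
    exact hm (by rw [hlead p m (not_lt.mp hle), Finsupp.single_eq_of_ne hne, mul_zero])

end Theta

end TGHA

open TGHA in
theorem statement1_general (n ℓ : ℕ) [NeZero n] (hℓ : 2 ≤ ℓ)
    (ζ : ℂ) (hζ : IsPrimitiveRoot ζ ℓ) (t : Fin n → ℂ)
    (Θ : H n ℓ ζ t →ₐ[ℂ] A n ℓ)
    (hΘx : ∀ i : Fin n,
      Θ (xx n ℓ ζ t i) =
        Ygen n ℓ ζ i -
          (ζ * t i / (ζ - 1)) • (Yinv n ℓ ζ (i + 1) * Uy n ℓ ζ (gelt n ℓ i)))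
    (hΘg : ∀ i : Fin n, Θ (ug n ℓ ζ t (gelt n ℓ i)) = Uy n ℓ ζ (gelt n ℓ i)) :
    Function.Injective Θ := by
  have : NeZero ℓ := ⟨by omega⟩
  have hevalInj : Function.Injective
      ((LinearMap.applyₗ (Finsupp.single (0 : M n ℓ) (1 : ℂ))).comp Θ.toLinearMap) :=
    LinearMap.injective_of_linearIndependent span_orderedMonomial_eq_top
      (linearIndependent_theta_orderedMonomial (hζ.ne_zero (NeZero.ne ℓ)) hΘx hΘg)
  exact fun a b hab => hevalInj (by simp [hab])

open TGHA in
/-- The algebra homomorphism `Θ : H → ℂ[y₁^±,…,y_n^±] #_α G` determined by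
`Θ(x_i) = y_i - (ζ t_i/(ζ-1)) y_{i+1}⁻¹ g_i` and `Θ(g_i) = g_i` for all `i` is injective. -/
theorem statement1 (n ℓ : ℕ) [NeZero n] (hn : 3 ≤ n) (hℓ : 2 ≤ ℓ)
    (ζ : ℂ) (hζ : IsPrimitiveRoot ζ ℓ) (t : Fin n → ℂ)
    (Θ : H n ℓ ζ t →ₐ[ℂ] A n ℓ)
    (hΘx : ∀ i : Fin n,
      Θ (xx n ℓ ζ t i) =
        Ygen n ℓ ζ i -
          (ζ * t i / (ζ - 1)) • (Yinv n ℓ ζ (i + 1) * Uy n ℓ ζ (gelt n ℓ i)))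
    (hΘg : ∀ i : Fin n, Θ (ug n ℓ ζ t (gelt n ℓ i)) = Uy n ℓ ζ (gelt n ℓ i)) :
    Function.Injective Θ :=
  statement1_general n ℓ hℓ ζ hζ t Θ hΘx hΘg
end
end

section
/- In the Laurent polynomial ring ℂ[y₁^±,…,y_n^±], setting ã_i = y_i^ℓ − τ̃_i y_{i+1}^{−ℓ} for i = 1,…,n (subscripts mod n), one has Σ_{{i₁<⋯<i_k}∈J} τ̃_{i₁}⋯τ̃_{i_k} ã^{δ−ε_{i₁}−⋯−ε_{i_k}} = (y₁⋯y_n)^ℓ + (−1)^{nℓ} (τ₁⋯τ_n)^ℓ (y₁⋯y_n)^{−ℓ}. -/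
/-!
Common setup for the twisted graded Hecke algebra associated to the homocyclic
group `G ≅ (ℤ/ℓℤ)^{n-1}` (Gan–Highfield, "Center of twisted graded Hecke
algebras for homocyclic groups").

All indices are 0-based: the paper's `x_i, g_i, t_i, τ_i` (for `i = 1, …, n`)
correspond to index `i - 1 : Fin n` here; subscripts are taken mod `n` via the
(wrap-around) addition of `Fin n`.
-/

noncomputable section

namespace TGHA

/-- The Laurent monomial `y_i` in the Laurent polynomial ring `ℂ[y₁^±,…,y_n^±]`. -/
def yL (n : ℕ) (i : Fin n) : AddMonoidAlgebra ℂ (Fin n → ℤ) :=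
  AddMonoidAlgebra.single (Pi.single i 1) 1

/-- The Laurent monomial `y_i⁻¹` in `ℂ[y₁^±,…,y_n^±]`. -/
def yLinv (n : ℕ) (i : Fin n) : AddMonoidAlgebra ℂ (Fin n → ℤ) :=
  AddMonoidAlgebra.single (-Pi.single i 1) 1

/-- `ã_i = y_i^ℓ - τ̃_i y_{i+1}^{-ℓ}` (subscripts mod `n`). -/
def atilde (n ℓ : ℕ) [NeZero n] (ζ : ℂ) (t : Fin n → ℂ) (i : Fin n) :
    AddMonoidAlgebra ℂ (Fin n → ℤ) :=
  yL n i ^ ℓ - taut n ℓ ζ t i • yLinv n (i + 1) ^ ℓ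

end TGHA

/-!
Write `ã_j = a_j - b_j` with `a_j = y_j^ℓ` and `b_j = τ̃_j y_{j+1}^{-ℓ}`, so that
`b_j a_{j+1} = τ̃_j` is a scalar. Expanding the products, the left side becomes a signed sum over
pairs `(S, T)` with `S ∈ J` and `T` a set of positions not covered by `S`, and the term of
`(S, T)` is `± b^U a^{Uᶜ}` with `U = S ∪ T`: each `τ̃_i`, `i ∈ S`, supplies the missing `b_i a_{i+1}`.
Conversely, for a given `U` the admissible `S` are exactly the subsets of the set of ends of
cyclic runs of `U`, so the coefficient of `b^U a^{Uᶜ}` is an alternating sum over a powerset.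
It vanishes unless `U` has no run ends, i.e. `U = ∅` or `U` is everything, and these two terms
give `∏ a_j + (-1)^n ∏ b_j`.
-/

namespace TGHA

open Finset

section Cyclic

variable {n : ℕ} [NeZero n]

def uncovered (S : Finset (Fin n)) : Finset (Fin n) :=
  univ.filter fun j => j ∉ S ∧ j - 1 ∉ S

def runEnds (U : Finset (Fin n)) : Finset (Fin n) :=
  U.filter fun i => i + 1 ∉ U

@[simp]
lemma mem_uncovered {S : Finset (Fin n)} {j : Fin n} :
    j ∈ uncovered S ↔ j ∉ S ∧ j - 1 ∉ S := by
  simp [uncovered]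

@[simp]
lemma mem_runEnds {U : Finset (Fin n)} {i : Fin n} :
    i ∈ runEnds U ↔ i ∈ U ∧ i + 1 ∉ U := by
  simp [runEnds]

lemma mem_Jset {S : Finset (Fin n)} : S ∈ Jset n ↔ ∀ i ∈ S, i + 1 ∉ S := by
  simp only [Jset, mem_filter, mem_univ, true_and]
  exact ⟨fun h i hi hi' => h i hi _ hi' rfl, fun h i hi j hj hji => h i hi (hji ▸ hj)⟩

lemma prod_pow_expS {M : Type*} [CommMonoid M] (x : Fin n → M) (S : Finset (Fin n)) :
    ∏ j, x j ^ expS n S j = ∏ j ∈ uncovered S, x j := by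
  rw [uncovered, prod_filter]
  refine prod_congr rfl fun j _ => ?_
  by_cases h : j ∈ S ∨ j - 1 ∈ S
  · rw [expS, if_pos h, pow_zero, if_neg (by tauto)]
  · rw [expS, if_neg h, pow_one, if_pos (by tauto)]

lemma subset_runEnds_iff {S U : Finset (Fin n)} :
    S ⊆ runEnds U ↔ S ∈ Jset n ∧ S ⊆ U ∧ U \ S ⊆ uncovered S := by
  simp only [subset_iff, mem_runEnds, mem_Jset, mem_sdiff, mem_uncovered]
  constructor
  · intro h
    exact ⟨fun i hi hi' => (h hi).2 (h hi').1, fun i hi => (h hi).1,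
      fun j hj => ⟨hj.2, fun hj' => (h hj').2 (by rw [sub_add_cancel]; exact hj.1)⟩⟩
  · rintro ⟨hJ, hSU, hUS⟩ i hi
    refine ⟨hSU hi, fun hi' => ?_⟩
    by_cases hiS : i + 1 ∈ S
    · exact hJ i hi hiS
    · exact (hUS ⟨hi', hiS⟩).2 (by rwa [add_sub_cancel_right])

lemma sum_Jset_sum_powerset_uncovered {M : Type*} [AddCommMonoid M]
    (F : Finset (Fin n) → Finset (Fin n) → M) :
    ∑ S ∈ Jset n, ∑ T ∈ (uncovered S).powerset, F S T =
      ∑ U, ∑ S ∈ (runEnds U).powerset, F S (U \ S) := by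
  have hdisj : ∀ {S T : Finset (Fin n)}, T ⊆ uncovered S → Disjoint S T := fun hT =>
    disjoint_right.mpr fun _ hj => (mem_uncovered.mp (hT hj)).1
  rw [sum_sigma', sum_sigma']
  refine sum_nbij' (fun p => ⟨p.1 ∪ p.2, p.1⟩) (fun q => ⟨q.2, q.1 \ q.2⟩) ?_ ?_ ?_ ?_ ?_
  · rintro ⟨S, T⟩ hp
    simp only [mem_sigma, mem_powerset, mem_univ, true_and] at hp ⊢
    exact subset_runEnds_iff.mpr ⟨hp.1, subset_union_left,
      (union_sdiff_cancel_left (hdisj hp.2)).symm ▸ hp.2⟩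
  · rintro ⟨U, S⟩ hq
    simp only [mem_sigma, mem_powerset, mem_univ, true_and] at hq ⊢
    obtain ⟨hJ, -, hUS⟩ := subset_runEnds_iff.mp hq
    exact ⟨hJ, hUS⟩
  · rintro ⟨S, T⟩ hp
    simp only [mem_sigma, mem_powerset] at hp
    simp only [union_sdiff_cancel_left (hdisj hp.2)]
  · rintro ⟨U, S⟩ hq
    simp only [mem_sigma, mem_powerset] at hq
    simp only [union_sdiff_of_subset (subset_runEnds_iff.mp hq.2).2.1]
  · rintro ⟨S, T⟩ hp
    simp only [mem_sigma, mem_powerset] at hp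
    simp only [union_sdiff_cancel_left (hdisj hp.2)]

open Fin.NatCast in
lemma runEnds_eq_empty_iff {U : Finset (Fin n)} : runEnds U = ∅ ↔ U = ∅ ∨ U = univ := by
  refine ⟨fun h => ?_, ?_⟩
  · refine U.eq_empty_or_nonempty.imp_right fun ⟨i, hi⟩ => eq_univ_iff_forall.mpr fun j => ?_
    have hsucc : ∀ k ∈ U, k + 1 ∈ U := fun k hk => by
      by_contra hk'
      simpa [h] using mem_runEnds.mpr ⟨hk, hk'⟩
    have hshift : ∀ m : ℕ, i + (m : Fin n) ∈ U := by
      intro m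
      induction m with
      | zero => simpa using hi
      | succ m ih => simpa [add_assoc] using hsucc _ ih
    simpa using hshift (j - i).val
  · rintro (rfl | rfl) <;> simp [runEnds]

lemma compl_eq_uncovered_sdiff_union_map {S U : Finset (Fin n)} (hS : S ⊆ runEnds U) :
    Uᶜ = (uncovered S \ (U \ S)) ∪ S.map (Equiv.addRight 1).toEmbedding := by
  have hSU : S ⊆ U := (subset_runEnds_iff.mp hS).2.1
  ext j
  simp only [mem_compl, mem_union, mem_sdiff, mem_uncovered, mem_map_equiv,
    Equiv.addRight_symm, Equiv.coe_addRight, ← sub_eq_add_neg]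
  have hpred : j - 1 ∈ S → j ∉ U := fun h => by simpa using (mem_runEnds.mp (hS h)).2
  have := @hSU j
  tauto

lemma disjoint_uncovered_sdiff_map (S T : Finset (Fin n)) :
    Disjoint (uncovered S \ T) (S.map (Equiv.addRight 1).toEmbedding) := by
  simp only [disjoint_left, mem_sdiff, mem_uncovered, mem_map_equiv,
    Equiv.addRight_symm, Equiv.coe_addRight, ← sub_eq_add_neg]
  exact fun _ h => h.1.2

section CommRing

variable {R : Type*} [CommRing R]

lemma prod_mul_prod_eq_of_subset_runEnds (a b : Fin n → R) {S U : Finset (Fin n)}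
    (hS : S ⊆ runEnds U) :
    (∏ i ∈ S, b i * a (i + 1)) * ((∏ j ∈ uncovered S \ (U \ S), a j) * ∏ j ∈ U \ S, b j) =
      (∏ j ∈ U, b j) * ∏ j ∈ Uᶜ, a j := by
  rw [compl_eq_uncovered_sdiff_union_map hS, prod_union (disjoint_uncovered_sdiff_map _ _),
    prod_map, ← prod_sdiff (subset_runEnds_iff.mp hS).2.1, prod_mul_distrib]
  simp only [Equiv.coe_toEmbedding, Equiv.coe_addRight]
  ring

lemma sum_powerset_runEnds_neg_one_pow (U : Finset (Fin n)) :
    ∑ S ∈ (runEnds U).powerset, (-1 : R) ^ #(U \ S) =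
      if U = ∅ ∨ U = univ then (-1) ^ #U else 0 := by
  have hsign : ∀ S ∈ (runEnds U).powerset, (-1 : R) ^ #(U \ S) = (-1) ^ #U * (-1) ^ #S := by
    intro S hS
    have hSU : S ⊆ U := (mem_powerset.mp hS).trans (filter_subset _ _)
    rw [← card_sdiff_add_card_eq_card hSU, pow_add, mul_assoc, ← pow_add, ← two_mul, pow_mul,
      neg_one_sq, one_pow, mul_one]
  have hsum : ∑ S ∈ (runEnds U).powerset, (-1 : R) ^ #S = if runEnds U = ∅ then 1 else 0 := by
    exact_mod_cast congrArg (Int.cast : ℤ → R) sum_powerset_neg_one_pow_card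
  rw [sum_congr rfl hsign, ← mul_sum, hsum]
  simp only [runEnds_eq_empty_iff, mul_ite, mul_one, mul_zero]

theorem sum_Jset_prod_mul_prod_uncovered_sub (a b : Fin n → R) :
    ∑ S ∈ Jset n, (∏ i ∈ S, b i * a (i + 1)) * ∏ j ∈ uncovered S, (a j - b j) =
      ∏ j, a j + (-1) ^ n * ∏ j, b j := by
  calc _ = ∑ S ∈ Jset n, ∑ T ∈ (uncovered S).powerset, (-1) ^ #T *
        ((∏ i ∈ S, b i * a (i + 1)) * ((∏ j ∈ uncovered S \ T, a j) * ∏ j ∈ T, b j)) := by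
        refine sum_congr rfl fun S _ => ?_
        rw [prod_sub, mul_sum]
        exact sum_congr rfl fun T _ => by ring
    _ = ∑ U, ∑ S ∈ (runEnds U).powerset, (-1) ^ #(U \ S) * ((∏ j ∈ U, b j) * ∏ j ∈ Uᶜ, a j) := by
        rw [sum_Jset_sum_powerset_uncovered]
        refine sum_congr rfl fun U _ => sum_congr rfl fun S hS => ?_
        rw [prod_mul_prod_eq_of_subset_runEnds a b (mem_powerset.mp hS)]
    _ = ∑ U, (if U = ∅ ∨ U = univ then (-1) ^ #U else 0) * ((∏ j ∈ U, b j) * ∏ j ∈ Uᶜ, a j) := by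
        simp only [← sum_mul, sum_powerset_runEnds_neg_one_pow]
    _ = _ := by
        rw [Fintype.sum_eq_add ∅ univ univ_nonempty.ne_empty.symm (fun U hU => by simp [hU.1, hU.2])]
        simp

end CommRing

end Cyclic

lemma prod_taut (ℓ : ℕ) (ζ : ℂ) {n : ℕ} (t : Fin n → ℂ) :
    ∏ i, taut n ℓ ζ t i = (-1) ^ (n * (ℓ - 1)) * (∏ i, tau n ζ t i) ^ ℓ := by
  cases n with
  | zero => simp
  | succ m =>
    have hlt (i : Fin m) : (i : ℕ) ≠ m := i.is_lt.ne
    simp only [Fin.prod_univ_castSucc, taut, Fin.val_castSucc, Fin.val_last, Nat.add_sub_cancel,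
      hlt, ↓reduceIte, prod_pow, mul_pow]
    ring

lemma yLinv_pow_mul_yL_pow (n ℓ : ℕ) (j : Fin n) : yLinv n j ^ ℓ * yL n j ^ ℓ = 1 := by
  rw [yL, yLinv, AddMonoidAlgebra.single_pow, AddMonoidAlgebra.single_pow,
    AddMonoidAlgebra.single_mul_single]
  simp [AddMonoidAlgebra.one_def]

lemma prod_taut_smul_yLinv_succ_pow (ℓ : ℕ) (ζ : ℂ) {n : ℕ} [NeZero n] (t : Fin n → ℂ) :
    ∏ j, taut n ℓ ζ t j • yLinv n (j + 1) ^ ℓ =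
      ((-1) ^ (n * (ℓ - 1)) * (∏ i, tau n ζ t i) ^ ℓ) • (∏ j, yLinv n j) ^ ℓ := by
  rw [prod_smul, prod_taut, Fintype.prod_equiv (Equiv.addRight 1)
    (fun j => yLinv n (j + 1) ^ ℓ) (fun j => yLinv n j ^ ℓ) fun _ => rfl, prod_pow]

lemma neg_one_pow_mul_neg_one_pow_mul_sub_one {M : Type*} [Monoid M] [HasDistribNeg M]
    (n : ℕ) {ℓ : ℕ} (hℓ : ℓ ≠ 0) : (-1 : M) ^ n * (-1) ^ (n * (ℓ - 1)) = (-1) ^ (n * ℓ) := by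
  obtain ⟨k, rfl⟩ := Nat.exists_eq_succ_of_ne_zero hℓ
  rw [← pow_add, Nat.succ_sub_one, Nat.mul_succ, add_comm]

end TGHA

open TGHA in
theorem statement8_general (n ℓ : ℕ) [NeZero n] (hℓ : 2 ≤ ℓ)
    (ζ : ℂ) (t : Fin n → ℂ) :
    ∑ S ∈ Jset n, (∏ i ∈ S, taut n ℓ ζ t i) • ∏ j : Fin n, atilde n ℓ ζ t j ^ expS n S j =
      (∏ j : Fin n, yL n j) ^ ℓ +
        ((-1 : ℂ) ^ (n * ℓ) * (∏ i : Fin n, tau n ζ t i) ^ ℓ) •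
          (∏ j : Fin n, yLinv n j) ^ ℓ := by
  let a (j : Fin n) := yL n j ^ ℓ
  let b (j : Fin n) := taut n ℓ ζ t j • yLinv n (j + 1) ^ ℓ
  have hba (i : Fin n) : b i * a (i + 1) = algebraMap ℂ _ (taut n ℓ ζ t i) := by
    rw [smul_mul_assoc, yLinv_pow_mul_yL_pow, Algebra.algebraMap_eq_smul_one]
  calc _ = ∑ S ∈ Jset n, (∏ i ∈ S, b i * a (i + 1)) * ∏ j ∈ uncovered S, (a j - b j) := by
        simp only [hba, ← map_prod, ← Algebra.smul_def, prod_pow_expS, atilde, a, b]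
    _ = ∏ j, a j + (-1) ^ n * ∏ j, b j := sum_Jset_prod_mul_prod_uncovered_sub a b
    _ = _ := by
        rw [prod_taut_smul_yLinv_succ_pow, Finset.prod_pow,
          ← neg_one_pow_mul_neg_one_pow_mul_sub_one n (by omega : ℓ ≠ 0), mul_assoc, mul_smul ((-1 : ℂ) ^ n),
          Algebra.smul_def ((-1 : ℂ) ^ n), map_pow, map_neg, map_one]

open TGHA in
/-- In `ℂ[y₁^±,…,y_n^±]`, with `ã_i = y_i^ℓ - τ̃_i y_{i+1}^{-ℓ}`,
`Σ_{{i₁<⋯<i_k}∈J} τ̃_{i₁}⋯τ̃_{i_k} ã^{δ-ε_{i₁}-⋯-ε_{i_k}} = (y₁⋯y_n)^ℓ + (-1)^{nℓ} (τ₁⋯τ_n)^ℓ (y₁⋯y_n)^{-ℓ}`. -/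
theorem statement8 (n ℓ : ℕ) [NeZero n] (hn : 3 ≤ n) (hℓ : 2 ≤ ℓ)
    (ζ : ℂ) (hζ : IsPrimitiveRoot ζ ℓ) (t : Fin n → ℂ) :
    ∑ S ∈ Jset n, (∏ i ∈ S, taut n ℓ ζ t i) • ∏ j : Fin n, atilde n ℓ ζ t j ^ expS n S j =
      (∏ j : Fin n, yL n j) ^ ℓ +
        ((-1 : ℂ) ^ (n * ℓ) * (∏ i : Fin n, tau n ζ t i) ^ ℓ) •
          (∏ j : Fin n, yLinv n j) ^ ℓ :=
  statement8_general n ℓ hℓ ζ t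
end
end

section
/- The subalgebra of G-invariant elements of the polynomial algebra ℂ[x₁,…,x_n] is generated as a ℂ-algebra by x₁^ℓ, …, x_n^ℓ, and x₁x₂⋯x_n. -/
/-!
Common setup for the twisted graded Hecke algebra associated to the homocyclic
group `G ≅ (ℤ/ℓℤ)^{n-1}` (Gan–Highfield, "Center of twisted graded Hecke
algebras for homocyclic groups").

All indices are 0-based: the paper's `x_i, g_i, t_i, τ_i` (for `i = 1, …, n`)
correspond to index `i - 1 : Fin n` here; subscripts are taken mod `n` via the
(wrap-around) addition of `Fin n`.
-/

noncomputable section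

namespace TGHA

/-- The action of a group element `g = diag(ζ^{a 0}, …, ζ^{a (n-1)})` on the polynomial
algebra `ℂ[x₁,…,x_n]`, determined by `g ⬝ x_i = ζ^{a_i} x_i`. -/
def actG (n ℓ : ℕ) (ζ : ℂ) (a : Fin n → ZMod ℓ) :
    MvPolynomial (Fin n) ℂ →ₐ[ℂ] MvPolynomial (Fin n) ℂ :=
  MvPolynomial.aeval fun i => zp ℓ ζ (a i) • MvPolynomial.X i

end TGHA

/-!
A diagonal element `diag(ζ^{a₁},…,ζ^{a_n})` scales the monomial `x^d` by `ζ^{∑ aᵢdᵢ}`, so a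
polynomial is invariant iff each monomial in its support is. Testing `x^d` against
`aᵢ = 1, aⱼ = -1` shows that all exponents `dᵢ` are congruent to one `r` modulo `ℓ`, and then
`x^d = (x₁⋯x_n)^r ∏ᵢ (xᵢ^ℓ)^{⌊dᵢ/ℓ⌋}`. Conversely both kinds of generators are invariant,
because `ζ^ℓ = 1` and `∑ aᵢ = 0`.
-/

open MvPolynomial

lemma MvPolynomial.monomial_mem_adjoin_prod_X_X_pow {σ R : Type*} [Fintype σ] [CommSemiring R]
    {ℓ r : ℕ} {d : σ →₀ ℕ} (hd : ∀ i, d i % ℓ = r) (c : R) :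
    monomial d c ∈ Algebra.adjoin R (insert (∏ i, X i) (Set.range fun i => X i ^ ℓ)) := by
  have hsplit : monomial d c = c • ((∏ i, X i) ^ r * ∏ i, (X i ^ ℓ) ^ (d i / ℓ)) := by
    simp only [← Finset.prod_pow, ← Finset.prod_mul_distrib, ← pow_mul, ← pow_add, monomial_eq,
      Finsupp.prod_fintype _ _ (fun _ => pow_zero _), smul_eq_C_mul]
    congr 1
    refine Finset.prod_congr rfl fun i _ => ?_
    rw [← hd i, Nat.mod_add_div]
  rw [hsplit]
  refine Subalgebra.smul_mem _ (Subalgebra.mul_mem _ ?_ ?_) _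
  · exact Subalgebra.pow_mem _ (Algebra.subset_adjoin (Set.mem_insert _ _)) _
  · refine Subalgebra.prod_mem _ fun i _ => Subalgebra.pow_mem _ (Algebra.subset_adjoin ?_) _
    exact Set.mem_insert_of_mem _ (Set.mem_range_self i)

lemma IsPrimitiveRoot.pow_eq_one_iff_natCast_eq_zero {M : Type*} [CommMonoid M] {ζ : M} {ℓ : ℕ}
    (hζ : IsPrimitiveRoot ζ ℓ) (k : ℕ) : ζ ^ k = 1 ↔ (k : ZMod ℓ) = 0 := by
  rw [hζ.pow_eq_one_iff_dvd, ZMod.natCast_eq_zero_iff]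

namespace TGHA

variable {n ℓ : ℕ} {ζ : ℂ}

lemma mem_Gsub {a : Fin n → ZMod ℓ} : a ∈ Gsub n ℓ ↔ ∑ i, a i = 0 := Iff.rfl

lemma single_sub_single_mem_Gsub (i j : Fin n) : Pi.single i 1 - Pi.single j 1 ∈ Gsub n ℓ := by
  simp [mem_Gsub, Finset.sum_sub_distrib]

lemma exists_forall_mod_eq_of_forall_mem_Gsub {d : Fin n → ℕ}
    (hd : ∀ a ∈ Gsub n ℓ, ∑ i, a i * (d i : ZMod ℓ) = 0) : ∃ r, ∀ i, d i % ℓ = r := by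
  rcases isEmpty_or_nonempty (Fin n) with hn | ⟨⟨i₀⟩⟩
  · exact ⟨0, hn.elim⟩
  refine ⟨d i₀ % ℓ, fun i => (ZMod.natCast_eq_natCast_iff' _ _ _).mp ?_⟩
  have hi := hd _ (single_sub_single_mem_Gsub i i₀)
  simpa [sub_mul, Finset.sum_sub_distrib, Pi.single_apply, sub_eq_zero] using hi

lemma actG_X (a : Fin n → ZMod ℓ) (i : Fin n) : actG n ℓ ζ a (X i) = zp ℓ ζ (a i) • X i :=
  aeval_X _ _

lemma actG_monomial (a : Fin n → ZMod ℓ) (d : Fin n →₀ ℕ) (c : ℂ) :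
    actG n ℓ ζ a (monomial d c) = ζ ^ (∑ i, (a i).val * d i) • monomial d c := by
  rw [monomial_eq, Finsupp.prod_fintype _ _ (fun _ => pow_zero _), map_mul, algHom_C, map_prod]
  simp only [map_pow, actG_X, smul_pow, Finset.prod_smul, zp, ← pow_mul,
    Finset.prod_pow_eq_pow_sum, mul_smul_comm, algebraMap_eq]

lemma coeff_actG (a : Fin n → ZMod ℓ) (P : MvPolynomial (Fin n) ℂ) (d : Fin n →₀ ℕ) :
    coeff d (actG n ℓ ζ a P) = ζ ^ (∑ i, (a i).val * d i) * coeff d P := by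
  induction P using MvPolynomial.induction_on' with
  | monomial e c =>
    rw [actG_monomial, coeff_smul, coeff_monomial, smul_eq_mul]
    split_ifs with h <;> simp [h]
  | add P Q hP hQ => rw [map_add, coeff_add, coeff_add, hP, hQ, mul_add]

lemma sum_mul_eq_zero_of_mem_support [NeZero ℓ] (hζ : IsPrimitiveRoot ζ ℓ)
    {P : MvPolynomial (Fin n) ℂ} (hP : ∀ a ∈ Gsub n ℓ, actG n ℓ ζ a P = P)
    {d : Fin n →₀ ℕ} (hd : d ∈ P.support) {a : Fin n → ZMod ℓ} (ha : a ∈ Gsub n ℓ) :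
    ∑ i, a i * (d i : ZMod ℓ) = 0 := by
  have hfix : ζ ^ (∑ i, (a i).val * d i) * coeff d P = 1 * coeff d P := by
    rw [← coeff_actG, hP a ha, one_mul]
  have hζd := (hζ.pow_eq_one_iff_natCast_eq_zero _).mp
    (mul_right_cancel₀ (mem_support_iff.mp hd) hfix)
  simpa [ZMod.natCast_zmod_val] using hζd

lemma actG_prod_X [NeZero ℓ] (hζ : ζ ^ ℓ = 1) {a : Fin n → ZMod ℓ}
    (ha : a ∈ Gsub n ℓ) : actG n ℓ ζ a (∏ i, X i) = ∏ i, X i := by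
  have hdvd : ℓ ∣ ∑ i, (a i).val := by
    rw [← ZMod.natCast_eq_zero_iff]
    simpa [ZMod.natCast_zmod_val] using mem_Gsub.mp ha
  obtain ⟨m, hm⟩ := hdvd
  have hdet : ∏ i, zp ℓ ζ (a i) = 1 := by
    simp only [zp, Finset.prod_pow_eq_pow_sum, hm, pow_mul, hζ, one_pow]
  simp only [map_prod, actG_X, Finset.prod_smul, hdet, one_smul]

lemma actG_X_pow (hζ : ζ ^ ℓ = 1) (a : Fin n → ZMod ℓ) (i : Fin n) :
    actG n ℓ ζ a (X i ^ ℓ) = X i ^ ℓ := by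
  rw [map_pow, actG_X, smul_pow, zp, ← pow_mul, mul_comm, pow_mul, hζ, one_pow, one_smul]

end TGHA

open TGHA in
theorem statement12_general (n ℓ : ℕ) (hℓ : 2 ≤ ℓ)
    (ζ : ℂ) (hζ : IsPrimitiveRoot ζ ℓ) :
    {P : MvPolynomial (Fin n) ℂ | ∀ a ∈ Gsub n ℓ, actG n ℓ ζ a P = P} =
      ↑(Algebra.adjoin ℂ
        (insert (∏ i : Fin n, MvPolynomial.X i)
          (Set.range fun i : Fin n => (MvPolynomial.X i : MvPolynomial (Fin n) ℂ) ^ ℓ))) := by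
  have : NeZero ℓ := ⟨by omega⟩
  ext P
  constructor
  · intro hP
    rw [SetLike.mem_coe, P.as_sum]
    refine Subalgebra.sum_mem _ fun d hd => ?_
    obtain ⟨r, hr⟩ := exists_forall_mod_eq_of_forall_mem_Gsub fun a ha =>
      sum_mul_eq_zero_of_mem_support hζ hP hd ha
    exact monomial_mem_adjoin_prod_X_X_pow hr _
  · intro hP a ha
    refine Algebra.adjoin_le (S := AlgHom.equalizer (actG n ℓ ζ a) (AlgHom.id ℂ _)) ?_ hP
    rintro _ (rfl | ⟨i, rfl⟩)
    exacts [actG_prod_X hζ.pow_eq_one ha, actG_X_pow hζ.pow_eq_one a i]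

open TGHA in
/-- The subalgebra of `G`-invariants of `ℂ[x₁,…,x_n]` is generated as a
`ℂ`-algebra by `x₁^ℓ, …, x_n^ℓ` and `x₁x₂⋯x_n`. -/
theorem statement12 (n ℓ : ℕ) [NeZero n] (hn : 3 ≤ n) (hℓ : 2 ≤ ℓ)
    (ζ : ℂ) (hζ : IsPrimitiveRoot ζ ℓ) :
    {P : MvPolynomial (Fin n) ℂ | ∀ a ∈ Gsub n ℓ, actG n ℓ ζ a P = P} =
      ↑(Algebra.adjoin ℂ
        (insert (∏ i : Fin n, MvPolynomial.X i)
          (Set.range fun i : Fin n => (MvPolynomial.X i : MvPolynomial (Fin n) ℂ) ^ ℓ))) :=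
  statement12_general n ℓ hℓ ζ hζ
end
end

section
/- The ℓ-fold *-product of g_n with itself is the scalar (−1)^{n(ℓ−1)} times the identity of G; equivalently, ∏_{k=1}^{ℓ−1} α(g_n^k, g_n) = (−1)^{n(ℓ−1)}. -/
/-!
Common setup for the twisted graded Hecke algebra associated to the homocyclic
group `G ≅ (ℤ/ℓℤ)^{n-1}` (Gan–Highfield, "Center of twisted graded Hecke
algebras for homocyclic groups").

All indices are 0-based: the paper's `x_i, g_i, t_i, τ_i` (for `i = 1, …, n`)
correspond to index `i - 1 : Fin n` here; subscripts are taken mod `n` via the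
(wrap-around) addition of `Fin n`.
-/

noncomputable section

/-!
In the coordinates `g₁^{i₁} ⋯ g_{n-1}^{i_{n-1}}` the element `g_n^k` has `i_r = -k` for every `r`,
so `α(g_n^k, g_n) = ζ^{-(n-2)k}`. The product over `k` is therefore `ζ^{-(n-2)ℓ(ℓ-1)/2}`, and
`ζ^{ℓ(ℓ-1)/2}` is the product of all `ℓ`-th roots of unity, which is `(-1)^{ℓ-1}`.
-/

theorem IsPrimitiveRoot.prod_range_pow {R : Type*} [CommRing R] [NoZeroDivisors R] {ζ : R}
    {ℓ : ℕ} (hζ : IsPrimitiveRoot ζ ℓ) : ∏ i ∈ Finset.range ℓ, ζ ^ i = (-1) ^ (ℓ - 1) := by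
  have hsum := Finset.sum_range_id_mul_two ℓ
  rw [Finset.prod_pow_eq_pow_sum]
  obtain ⟨m, rfl | rfl⟩ := Nat.even_or_odd' ℓ
  · rcases Nat.eq_zero_or_pos m with rfl | hm
    · simp
    have hζm : ζ ^ m = -1 := by
      have := hζ.pow_of_dvd hm.ne' (dvd_mul_left m 2)
      rw [Nat.mul_div_cancel _ hm] at this
      exact this.eq_neg_one_of_two_right
    rw [show ∑ i ∈ Finset.range (2 * m), i = m * (2 * m - 1) from
      Nat.eq_of_mul_eq_mul_right two_pos (by rw [hsum]; ring), pow_mul, hζm]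
  · rw [Nat.add_sub_cancel] at hsum ⊢
    rw [show ∑ i ∈ Finset.range (2 * m + 1), i = (2 * m + 1) * m from
      Nat.eq_of_mul_eq_mul_right two_pos (by rw [hsum]; ring),
      pow_mul, hζ.pow_eq_one, one_pow, pow_mul]
    simp

namespace TGHA

lemma zp_neg_natCast {ℓ : ℕ} [NeZero ℓ] {ζ : ℂ} (hζ : ζ ^ ℓ = 1) (x : ℕ) :
    zp ℓ ζ (-(x : ZMod ℓ)) = (ζ ^ x)⁻¹ := by
  refine eq_inv_of_mul_eq_one_left ?_
  obtain ⟨c, hc⟩ : ℓ ∣ (-(x : ZMod ℓ)).val + x :=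
    (ZMod.natCast_eq_zero_iff _ _).1 (by push_cast; simp)
  rw [zp, ← pow_add, hc, pow_mul, hζ, one_pow]

variable {n ℓ : ℕ} [NeZero n]

lemma pS_nsmul (k : ℕ) (a : Fin n → ZMod ℓ) (r : ℕ) : pS n ℓ (k • a) r = k • pS n ℓ a r := by
  simp [pS, Finset.smul_sum]

lemma pS_gvec_neg_one {r : ℕ} (hr₁ : 1 ≤ r) (hr₂ : r ≤ n - 1) :
    pS n ℓ (gvec n ℓ (-1)) r = -1 := by
  obtain ⟨m, rfl⟩ : ∃ m, n = m + 1 := ⟨n - 1, by omega⟩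
  unfold pS
  rw [Finset.sum_eq_single_of_mem 0 (Finset.mem_range.2 hr₁)]
  · have h0 : (0 : Fin (m + 1)) ≠ -1 := by
      rw [Ne, Fin.ext_iff, Fin.coe_neg_one]; simp; omega
    simp [gvec, h0.symm]
  · intro b hb hb0
    have hval : (Fin.ofNat (m + 1) b : ℕ) = b := by
      rw [Fin.val_ofNat]; exact Nat.mod_eq_of_lt (by simp at hb; omega)
    have h1 : Fin.ofNat (m + 1) b ≠ -1 := by
      rw [Ne, Fin.ext_iff, Fin.coe_neg_one, hval]; simp at hb; omega
    have h2 : Fin.ofNat (m + 1) b ≠ -1 + 1 := by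
      rw [neg_add_cancel, Ne, Fin.ext_iff, hval]; simpa using hb0
    simp only [gvec, Pi.sub_apply, Pi.single_eq_of_ne h1, Pi.single_eq_of_ne h2, sub_zero]

lemma coc_nsmul_gvec_neg_one (ζ : ℂ) (k : ℕ) :
    coc n ℓ ζ (k • gvec n ℓ (-1)) (gvec n ℓ (-1)) = zp ℓ ζ (-(((n - 2) * k : ℕ) : ZMod ℓ)) := by
  have hterm : ∀ r ∈ Finset.Icc 1 (n - 2),
      pS n ℓ (k • gvec n ℓ (-1)) r * pS n ℓ (gvec n ℓ (-1)) (r + 1) = k := by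
    intro r hr
    obtain ⟨hr₁, hr₂⟩ := Finset.mem_Icc.mp hr
    rw [pS_nsmul, pS_gvec_neg_one hr₁ (by omega), pS_gvec_neg_one (by omega) (by omega)]
    simp
  rw [coc, Finset.sum_congr rfl hterm, Finset.sum_const, Nat.card_Icc, nsmul_eq_mul]
  push_cast
  ring_nf

end TGHA

open TGHA in
/-- `∏_{k=1}^{ℓ-1} α(g_n^k, g_n) = (-1)^{n(ℓ-1)}`, i.e. the `ℓ`-fold
`*`-product of `g_n` with itself is the scalar `(-1)^{n(ℓ-1)}` times the identity of `G`
(the paper's `g_n` is `gvec n ℓ (-1)`, the generator with index `n - 1` here). -/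
theorem statement13 (n ℓ : ℕ) [NeZero n] (hn : 3 ≤ n) (hℓ : 2 ≤ ℓ)
    (ζ : ℂ) (hζ : IsPrimitiveRoot ζ ℓ) :
    ∏ k ∈ Finset.Icc 1 (ℓ - 1), coc n ℓ ζ (k • gvec n ℓ (-1)) (gvec n ℓ (-1)) =
      (-1 : ℂ) ^ (n * (ℓ - 1)) := by
  have : NeZero ℓ := ⟨by omega⟩
  have hcoc (k : ℕ) : coc n ℓ ζ (k • gvec n ℓ (-1)) (gvec n ℓ (-1)) = ((ζ ^ k) ^ (n - 2))⁻¹ := by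
    rw [coc_nsmul_gvec_neg_one, zp_neg_natCast hζ.pow_eq_one, mul_comm, pow_mul]
  -- adjoining the factor `k = 0`, which is `1`, gives the product over all `ℓ`-th roots of unity
  have hrange : ∏ k ∈ Finset.Icc 1 (ℓ - 1), ((ζ ^ k) ^ (n - 2))⁻¹ =
      ∏ k ∈ Finset.range ℓ, ((ζ ^ k) ^ (n - 2))⁻¹ :=
    Finset.prod_subset (fun k hk => by simp at hk ⊢; omega)
      fun k hk hk' => by
        obtain rfl : k = 0 := by simp at hk hk'; omega
        simp
  obtain ⟨m, rfl⟩ : ∃ m, n = m + 2 := ⟨n - 2, by omega⟩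
  rw [Finset.prod_congr rfl fun k _ => hcoc k, hrange, Finset.prod_inv_distrib,
    Finset.prod_pow, hζ.prod_range_pow, Nat.add_sub_cancel, ← pow_mul, ← inv_pow, inv_neg_one,
    add_mul, pow_add, pow_mul (-1) 2, neg_one_sq, one_pow, mul_one, mul_comm]
end
end

section
/- The elements Y_i = y_i − (ζt_i/(ζ−1)) y_{i+1}⁻¹ g_i of ℂ[y₁^±,…,y_n^±]#_αG (for i = 1,…,n, subscripts mod n) satisfy Y_i Y_{i+1} − Y_{i+1} Y_i = t_i g_i for all i, and Y_i Y_j − Y_j Y_i = 0 for all i, j with |i−j| ∉ {1, n−1}. -/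
/-!
Common setup for the twisted graded Hecke algebra associated to the homocyclic
group `G ≅ (ℤ/ℓℤ)^{n-1}` (Gan–Highfield, "Center of twisted graded Hecke
algebras for homocyclic groups").

All indices are 0-based: the paper's `x_i, g_i, t_i, τ_i` (for `i = 1, …, n`)
correspond to index `i - 1 : Fin n` here; subscripts are taken mod `n` via the
(wrap-around) addition of `Fin n`.
-/

noncomputable section

namespace TGHA

/-- The element `Y_i = y_i - (ζ t_i/(ζ-1)) y_{i+1}⁻¹ g_i` of `ℂ[y₁^±,…,y_n^±] #_α G`. -/
def Yfull (n ℓ : ℕ) [NeZero n] (ζ : ℂ) (t : Fin n → ℂ) (i : Fin n) : A n ℓ :=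
  Ygen n ℓ ζ i - (ζ * t i / (ζ - 1)) • (Yinv n ℓ ζ (i + 1) * Uy n ℓ ζ (gelt n ℓ i))

end TGHA


/-!
The crossed product is realised by the operators `Top a`, which multiply like a twisted group
algebra, `Top a * Top b = σ(a, b) • Top (a + b)`, the cocycle identity for `σ` being an identity
between exponents in `ZMod ℓ`. Write `Y_i = y_i - c_i r_i` with `r_i = y_{i+1}⁻¹ g_i`. Since
`σ((p, 0), ·) = 1`, the `y_i` commute with each other; and `r_i`, `r_j` commute because, by
summation by parts in the partial-sum formula for `α`, the antisymmetric part of the exponent of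
`α(g_i, g_j)` is `(g_j)_i - (g_i)_j`, which cancels against that of the characters
`χ(g_i, y_{j+1}⁻¹)`. Hence
`[Y_i, Y_j] = c_i (1 - ζ^{(g_i)_j}) y_j r_i - c_j (1 - ζ^{(g_j)_i}) y_i r_j`: for `j = i + 1` the
first term is `t_i g_i` and the second vanishes, and for non-adjacent `i ≠ j` both vanish.
-/

namespace Fin

lemma self_ne_add_one {n : ℕ} [NeZero n] (hn : 2 ≤ n) (i : Fin n) : i ≠ i + 1 := by
  rw [Ne, eq_comm, add_eq_left, Fin.ext_iff, val_one', val_zero, Nat.mod_eq_of_lt hn]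
  exact one_ne_zero

lemma self_ne_add_one_add_one {n : ℕ} [NeZero n] (hn : 3 ≤ n) (i : Fin n) :
    i ≠ i + 1 + 1 := by
  rw [Ne, eq_comm, add_assoc, add_eq_left, Fin.ext_iff, val_add, val_one',
    Nat.mod_eq_of_lt (by omega : 1 < n), val_zero, Nat.mod_eq_of_lt (by omega : 1 + 1 < n)]
  exact two_ne_zero

end Fin

namespace TGHA

open Finset

section Character

variable {ℓ : ℕ} {ζ : ℂ}

lemma zp_zero : zp ℓ ζ 0 = 1 := by simp [zp]

lemma zp_add [NeZero ℓ] (hζ : ζ ^ ℓ = 1) (z w : ZMod ℓ) :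
    zp ℓ ζ (z + w) = zp ℓ ζ z * zp ℓ ζ w := by
  rw [zp, zp, zp, ← pow_add, ZMod.val_add, ← pow_eq_pow_mod _ hζ]

lemma zp_neg_one (hℓ : 2 ≤ ℓ) (hζ : ζ ^ ℓ = 1) : zp ℓ ζ (-1) = ζ⁻¹ := by
  have : Fact (1 < ℓ) := ⟨hℓ⟩
  have : NeZero ℓ := ⟨by omega⟩
  have h : zp ℓ ζ 1 * zp ℓ ζ (-1) = 1 := by rw [← zp_add hζ, add_neg_cancel, zp_zero]
  rw [zp, ZMod.val_one, pow_one] at h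
  exact (inv_eq_of_mul_eq_one_right h).symm

end Character

variable {n ℓ : ℕ} [NeZero n] {ζ : ℂ}

def cocExp (a b : Fin n → ZMod ℓ) : ZMod ℓ :=
  ∑ k ∈ Icc 1 (n - 2), pS n ℓ a k * pS n ℓ b (k + 1)

def sigmaExp (x y : M n ℓ) : ZMod ℓ :=
  -cocExp x.2.1 y.2.1 + ∑ j, x.2.1 j * (y.1 j : ZMod ℓ)

lemma sigma_eq_zp [NeZero ℓ] (hζ : ζ ^ ℓ = 1) (x y : M n ℓ) :
    sigma n ℓ ζ x y = zp ℓ ζ (sigmaExp x y) := by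
  rw [sigma, coc, chi, sigmaExp, zp_add hζ, cocExp]

lemma pS_add (a b : Fin n → ZMod ℓ) (k : ℕ) : pS n ℓ (a + b) k = pS n ℓ a k + pS n ℓ b k := by
  simp [pS, sum_add_distrib]

lemma sigmaExp_cocycle (x y z : M n ℓ) :
    sigmaExp y z + sigmaExp x (y + z) = sigmaExp x y + sigmaExp (x + y) z := by
  simp only [sigmaExp, cocExp, Prod.fst_add, Prod.snd_add, AddSubgroup.coe_add, pS_add,
    Pi.add_apply, Int.cast_add, mul_add, add_mul, sum_add_distrib]
  ring

lemma Top_mul [NeZero ℓ] (hζ : ζ ^ ℓ = 1) (a b : M n ℓ) :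
    Top n ℓ ζ a * Top n ℓ ζ b = sigma n ℓ ζ a b • Top n ℓ ζ (a + b) := by
  ext c : 2
  simp only [Module.End.mul_apply, LinearMap.smul_apply, LinearMap.comp_apply, Top,
    Finsupp.lsum_single, Finsupp.lsingle_apply, map_smul, smul_smul]
  rw [sigma_eq_zp hζ, sigma_eq_zp hζ, sigma_eq_zp hζ, sigma_eq_zp hζ, ← zp_add hζ, ← zp_add hζ,
    sigmaExp_cocycle, add_assoc]

lemma sigma_mk_zero_left (p : Fin n → ℤ) (y : M n ℓ) : sigma n ℓ ζ (p, 0) y = 1 := by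
  simp [sigma, coc, chi, pS, zp]

lemma pS_zero (a : Fin n → ZMod ℓ) : pS n ℓ a 0 = 0 := rfl

lemma pS_succ (a : Fin n → ZMod ℓ) (k : ℕ) : pS n ℓ a (k + 1) = pS n ℓ a k + a (Fin.ofNat n k) :=
  sum_range_succ _ _

lemma sum_range_ofNat_eq_sum_univ {β : Type*} [AddCommMonoid β] (f : ℕ → Fin n → β) :
    ∑ k ∈ range n, f k (Fin.ofNat n k) = ∑ k : Fin n, f k k := by
  rw [← Fin.sum_univ_eq_sum_range (fun k => f k (Fin.ofNat n k))]
  simp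

lemma pS_eq_zero_of_mem_Gsub {a : Fin n → ZMod ℓ} (ha : a ∈ Gsub n ℓ) : pS n ℓ a n = 0 := by
  rw [pS, sum_range_ofNat_eq_sum_univ (fun _ i => a i)]
  exact ha

lemma pS_val_add_one {a : Fin n → ZMod ℓ} (ha : a ∈ Gsub n ℓ) (j : Fin n) :
    pS n ℓ a ((j + 1 : Fin n) : ℕ) = pS n ℓ a j + a j := by
  obtain ⟨m, rfl⟩ := Nat.exists_eq_succ_of_ne_zero (NeZero.ne n)
  rw [Fin.val_add_one]
  split_ifs with hj
  · subst hj
    have hlast : Fin.ofNat (m + 1) m = Fin.last m := Fin.ext (by simp)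
    rw [Fin.val_last, pS_zero, ← hlast, ← pS_succ, pS_eq_zero_of_mem_Gsub ha]
  · rw [pS_succ, Fin.ofNat_val_eq_self]

lemma cocExp_eq_sum_range (a : Fin n → ZMod ℓ) {b : Fin n → ZMod ℓ} (hb : b ∈ Gsub n ℓ) :
    cocExp a b = ∑ k ∈ range n, pS n ℓ a k * pS n ℓ b (k + 1) := by
  apply sum_subset
  · intro k hk
    simp only [mem_Icc, mem_range] at hk ⊢
    omega
  · intro k hk hk'
    simp only [mem_Icc, mem_range, not_and_or, not_le] at hk hk'
    obtain rfl | rfl : k = 0 ∨ k = n - 1 := by omega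
    · rw [pS_zero, zero_mul]
    · rw [Nat.sub_add_cancel NeZero.one_le, pS_eq_zero_of_mem_Gsub hb, mul_zero]

lemma cocExp_sub_swap {a b : Fin n → ZMod ℓ} (ha : a ∈ Gsub n ℓ) (hb : b ∈ Gsub n ℓ) :
    cocExp a b - cocExp b a = ∑ k : Fin n, (pS n ℓ a k * b k - pS n ℓ b k * a k) := by
  rw [cocExp_eq_sum_range a hb, cocExp_eq_sum_range b ha, ← sum_sub_distrib,
    ← sum_range_ofNat_eq_sum_univ (fun k i => pS n ℓ a k * b i - pS n ℓ b k * a i)]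
  refine sum_congr rfl fun k _ => ?_
  rw [pS_succ, pS_succ]
  ring

lemma gvec_apply (i j : Fin n) :
    gvec n ℓ i j = (if j = i then 1 else 0) - (if j = i + 1 then 1 else 0) := by
  simp [gvec, Pi.single_apply]

lemma gvec_apply_eq_zero {i j : Fin n} (h₁ : j ≠ i) (h₂ : j ≠ i + 1) : gvec n ℓ i j = 0 := by
  rw [gvec_apply, if_neg h₁, if_neg h₂, sub_zero]

lemma sum_pS_mul_gvec {a : Fin n → ZMod ℓ} (ha : a ∈ Gsub n ℓ) (j : Fin n) :
    ∑ k : Fin n, pS n ℓ a k * gvec n ℓ j k = -a j := by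
  simp only [gvec_apply, mul_sub, mul_ite, mul_one, mul_zero, sum_sub_distrib, sum_ite_eq',
    mem_univ, if_true, pS_val_add_one ha]
  ring

lemma cocExp_gvec_sub_swap (i j : Fin n) :
    cocExp (gvec n ℓ i) (gvec n ℓ j) - cocExp (gvec n ℓ j) (gvec n ℓ i)
      = gvec n ℓ j i - gvec n ℓ i j := by
  rw [cocExp_sub_swap (gvec_mem n ℓ i) (gvec_mem n ℓ j), sum_sub_distrib,
    sum_pS_mul_gvec (gvec_mem n ℓ i), sum_pS_mul_gvec (gvec_mem n ℓ j)]
  ring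

lemma gvec_sub_gvec_add_one_comm (i j : Fin n) :
    gvec n ℓ j i - gvec n ℓ j (i + 1) = gvec n ℓ i j - gvec n ℓ i (j + 1) := by
  simp only [gvec_apply, add_left_inj, @eq_comm _ (i + 1) j, @eq_comm _ i (j + 1), @eq_comm _ i j]
  ring

-- Stated in an abstract algebra because in `Module.End` the `LinearMap` instances of `-`, `•`
-- do not match those of ring lemmas such as `sub_mul` syntactically, so `rw`/`simp` fail there.
section TwistedProduct

variable {R ι : Type*} [Ring R] [Algebra ℂ R] [AddCommMagma ι] {T : ι → R} {σ : ι → ι → ℂ}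

lemma commutator_sub_smul_of_twisted_mul (hT : ∀ a b, T a * T b = σ a b • T (a + b))
    {x y r s : ι} (c d : ℂ) (hx : ∀ z, σ x z = 1) (hy : ∀ z, σ y z = 1) (hrs : σ r s = σ s r) :
    (T x - c • T r) * (T y - d • T s) - (T y - d • T s) * (T x - c • T r)
      = (c * (1 - σ r y)) • T (y + r) - (d * (1 - σ s x)) • T (x + s) := by
  simp only [sub_mul, mul_sub, smul_mul_assoc, mul_smul_comm, hT, hx, hy, hrs, smul_smul,
    one_smul]
  rw [add_comm r y, add_comm s x, add_comm s r, add_comm y x]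
  module

end TwistedProduct

def yInvG (n ℓ : ℕ) [NeZero n] (i : Fin n) : M n ℓ := (-Pi.single (i + 1) 1, gelt n ℓ i)

lemma Yfull_eq [NeZero ℓ] (hζ : ζ ^ ℓ = 1) (t : Fin n → ℂ) (i : Fin n) :
    Yfull n ℓ ζ t i
      = Top n ℓ ζ (Pi.single i 1, 0) - (ζ * t i / (ζ - 1)) • Top n ℓ ζ (yInvG n ℓ i) := by
  rw [Yfull, Ygen, Yinv, Uy, Top_mul hζ, sigma_mk_zero_left, one_smul, Prod.mk_add_mk,
    add_zero, zero_add, yInvG]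

lemma sigma_yInvG_single [NeZero ℓ] (hζ : ζ ^ ℓ = 1) (i j : Fin n) :
    sigma n ℓ ζ (yInvG n ℓ i) (Pi.single j 1, 0) = zp ℓ ζ (gvec n ℓ i j) := by
  simp [sigma_eq_zp hζ, sigmaExp, cocExp, yInvG, gelt, pS, Pi.single_apply]

lemma sigmaExp_yInvG_comm (i j : Fin n) :
    sigmaExp (yInvG n ℓ i) (yInvG n ℓ j) = sigmaExp (yInvG n ℓ j) (yInvG n ℓ i) := by
  have hchi (a : Fin n → ZMod ℓ) (c : Fin n) :
      ∑ k, a k * (((-Pi.single c 1 : Fin n → ℤ) k : ℤ) : ZMod ℓ) = -a c := by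
    simp [Pi.single_apply]
  simp only [sigmaExp, yInvG, gelt, hchi]
  linear_combination (-1 : ZMod ℓ) * cocExp_gvec_sub_swap i j - gvec_sub_gvec_add_one_comm i j

lemma Yfull_commutator [NeZero ℓ] (hζ : ζ ^ ℓ = 1) (t : Fin n → ℂ) (i j : Fin n) :
    Yfull n ℓ ζ t i * Yfull n ℓ ζ t j - Yfull n ℓ ζ t j * Yfull n ℓ ζ t i
      = (ζ * t i / (ζ - 1) * (1 - zp ℓ ζ (gvec n ℓ i j))) •
          Top n ℓ ζ ((Pi.single j 1, 0) + yInvG n ℓ i)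
        - (ζ * t j / (ζ - 1) * (1 - zp ℓ ζ (gvec n ℓ j i))) •
          Top n ℓ ζ ((Pi.single i 1, 0) + yInvG n ℓ j) := by
  rw [Yfull_eq hζ, Yfull_eq hζ, ← sigma_yInvG_single hζ, ← sigma_yInvG_single hζ]
  exact commutator_sub_smul_of_twisted_mul (R := A n ℓ) (Top_mul hζ) _ _ (sigma_mk_zero_left _)
    (sigma_mk_zero_left _) (by rw [sigma_eq_zp hζ, sigma_eq_zp hζ, sigmaExp_yInvG_comm])

end TGHA

open TGHA in
/-- The elements `Y_i = y_i - (ζ t_i/(ζ-1)) y_{i+1}⁻¹ g_i` of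
`ℂ[y₁^±,…,y_n^±] #_α G` satisfy `Y_i Y_{i+1} - Y_{i+1} Y_i = t_i g_i` for all `i`, and
`Y_i Y_j - Y_j Y_i = 0` for all `i, j` with `|i-j| ∉ {1, n-1}`. -/
theorem statement14 (n ℓ : ℕ) [NeZero n] (hn : 3 ≤ n) (hℓ : 2 ≤ ℓ)
    (ζ : ℂ) (hζ : IsPrimitiveRoot ζ ℓ) (t : Fin n → ℂ) :
    (∀ i : Fin n,
      Yfull n ℓ ζ t i * Yfull n ℓ ζ t (i + 1) - Yfull n ℓ ζ t (i + 1) * Yfull n ℓ ζ t i =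
        t i • Uy n ℓ ζ (gelt n ℓ i)) ∧
    ∀ i j : Fin n, j ≠ i + 1 → i ≠ j + 1 →
      Yfull n ℓ ζ t i * Yfull n ℓ ζ t j - Yfull n ℓ ζ t j * Yfull n ℓ ζ t i = 0 := by
  have : NeZero ℓ := ⟨by omega⟩
  have hζℓ : ζ ^ ℓ = 1 := hζ.pow_eq_one
  have hζ0 : ζ ≠ 0 := hζ.ne_zero (by omega)
  have hζ1 : ζ - 1 ≠ 0 := sub_ne_zero.mpr (hζ.ne_one hℓ)
  refine ⟨fun i => ?_, fun i j hji hij => ?_⟩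
  · have hne := Fin.self_ne_add_one (by omega) i
    have hg₁ : gvec n ℓ i (i + 1) = -1 := by rw [gvec_apply, if_neg hne.symm, if_pos rfl, zero_sub]
    have hg₂ : gvec n ℓ (i + 1) i = 0 :=
      gvec_apply_eq_zero hne (Fin.self_ne_add_one_add_one hn i)
    have hmono : ((Pi.single (i + 1) 1, 0) : M n ℓ) + yInvG n ℓ i = (0, gelt n ℓ i) := by
      simp [yInvG]
    have hcoef : ζ * t i / (ζ - 1) * (1 - ζ⁻¹) = t i := by field_simp
    rw [Yfull_commutator hζℓ, hg₁, hg₂, zp_neg_one hℓ hζℓ, zp_zero, hmono, hcoef, sub_self,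
      mul_zero, zero_smul]
    exact sub_zero (t i • Top n ℓ ζ (0, gelt n ℓ i))
  · obtain rfl | hne := eq_or_ne i j
    · exact sub_self (Yfull n ℓ ζ t i * Yfull n ℓ ζ t i)
    rw [Yfull_commutator hζℓ, gvec_apply_eq_zero hne.symm hji, gvec_apply_eq_zero hne hij, zp_zero,
      sub_self, mul_zero, zero_smul, mul_zero, zero_smul]
    exact sub_zero (0 : A n ℓ)
end
end
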